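/- arXiv:math/0411476 — 10 statements merged into one kernel-verified Lean document; each statement's English description precedes it below -/
import Mathlib

section
/- Let $b_1,\dots,b_m$ and $c_1,\dots,c_m$ and $a_2$ be real numbers such that none of the quantities $a_2+b_i-c_j$, $b_i-b_j$ ($i\ne j$), $c_i-c_j$ ($i\ne j$) is an integer. Define $\mu_{i}^2 = \prod_{k=1}^m \sin\pi(a_2+b_k-c_i) / \prod_{k\ne i}\sin\pi(c_k-c_i)$ and $\nu_{i}^2 = \prod_{k=1}^m \sin\pi(a_2+b_i-c_k) / \prod_{k\ne i}\sin\pi(b_i-b_k)$. Then the matrix $D$ with entries $D_{ij} = 1/\sin\pi(a_2+b_i-c_j)$ is invertible with inverse $D^{-1}_{ij} = \mu_i^2\,\nu_j^2/\sin\pi(a_2+b_j-c_i)$. -/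
open Finset Real

section AuxLemmas

open Polynomial in
private lemma cauchy_sum' {F : Type*} [Field F] {m : ℕ} (x y : Fin m → F)
    (hxy : ∀ i j, x i - y j ≠ 0) (hy : ∀ ⦃i j⦄, i ≠ j → y i - y j ≠ 0) (i k : Fin m) :
    ∑ j, (∏ l ∈ univ.erase k, (y j - x l)) /
        ((∏ l ∈ univ.erase j, (y j - y l)) * (x i - y j))
      = (∏ l ∈ univ.erase k, (x i - x l)) / ∏ l, (x i - y l) := by
  classical
  have hym : Set.InjOn y (univ : Finset (Fin m)) := by
    intro p _ q _ h
    by_contra hne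
    exact hy hne (sub_eq_zero.mpr h)
  set g : F[X] := ∏ l ∈ univ.erase k, (X - C (x l)) with hg
  have hdeg : g.degree < (univ : Finset (Fin m)).card := by
    rw [hg, degree_prod]
    simp only [degree_X_sub_C, Finset.sum_const, nsmul_eq_mul, mul_one]
    rw [Finset.card_erase_of_mem (mem_univ k)]
    rw [Finset.card_univ, Fintype.card_fin]
    exact_mod_cast Nat.sub_lt (Fin.pos k) one_pos
  have key := Lagrange.eq_interpolate (v := y) hym hdeg
  have hev := congrArg (Polynomial.eval (x i)) key
  rw [Lagrange.interpolate_apply, Polynomial.eval_finset_sum] at hev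
  simp only [eval_mul, eval_C, Lagrange.basis, Lagrange.basisDivisor, eval_prod,
    eval_mul, eval_sub, eval_X, eval_C, hg] at hev
  -- hev : ∏ l in erase k, (x i - x l) = ∑ j, (∏ l in erase k, (y j - x l)) * ∏ l in erase j, ((y j - y l)⁻¹ * (x i - y l))
  rw [eq_div_iff (Finset.prod_ne_zero_iff.mpr fun l _ => hxy i l), hev, Finset.sum_mul]
  refine Finset.sum_congr rfl fun j _ => ?_
  rw [← Finset.prod_erase_mul univ (fun l => x i - y l) (mem_univ j),
    Finset.prod_mul_distrib]
  have hyj : (∏ l ∈ univ.erase j, (y j - y l)) ≠ 0 :=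
    Finset.prod_ne_zero_iff.mpr fun l hl => hy ((mem_erase.mp hl).1).symm
  field_simp
  rw [Finset.prod_div_distrib, Finset.prod_const_one, div_eq_iff (hxy i j)]
  field_simp

private lemma sin_pi_sub_eq (u v : ℝ) :
    (Real.sin (π * (u - v)) : ℂ) =
      (Complex.exp ((π:ℂ) * u * Complex.I) ^ 2 - Complex.exp ((π:ℂ) * v * Complex.I) ^ 2) /
        (2 * Complex.I * (Complex.exp ((π:ℂ) * u * Complex.I) * Complex.exp ((π:ℂ) * v * Complex.I))) := by
  have hne : (2 : ℂ) * Complex.I *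
      (Complex.exp ((π:ℂ) * u * Complex.I) * Complex.exp ((π:ℂ) * v * Complex.I)) ≠ 0 := by
    apply mul_ne_zero (mul_ne_zero two_ne_zero Complex.I_ne_zero)
    exact mul_ne_zero (Complex.exp_ne_zero _) (Complex.exp_ne_zero _)
  rw [eq_div_iff hne, Complex.ofReal_sin, Complex.sin]
  have h1 : Complex.exp (-(↑(π * (u - v))) * Complex.I) *
      (Complex.exp ((π:ℂ) * u * Complex.I) * Complex.exp ((π:ℂ) * v * Complex.I)) =
      Complex.exp ((π:ℂ) * v * Complex.I) ^ 2 := by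
    rw [sq, ← Complex.exp_add, ← Complex.exp_add, ← Complex.exp_add]
    congr 1
    push_cast
    ring
  have h2 : Complex.exp ((↑(π * (u - v))) * Complex.I) *
      (Complex.exp ((π:ℂ) * u * Complex.I) * Complex.exp ((π:ℂ) * v * Complex.I)) =
      Complex.exp ((π:ℂ) * u * Complex.I) ^ 2 := by
    rw [sq, ← Complex.exp_add, ← Complex.exp_add, ← Complex.exp_add]
    congr 1
    push_cast
    ring
  linear_combination (Complex.exp (-(↑(π * (u - v))) * Complex.I) -
      Complex.exp ((↑(π * (u - v))) * Complex.I)) *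
      (Complex.exp ((π:ℂ) * u * Complex.I) * Complex.exp ((π:ℂ) * v * Complex.I)) *
      Complex.I_sq + h2 - h1

private lemma exp_sq_sub_ne (u v : ℝ) (h : ∀ n : ℤ, u - v ≠ n) :
    Complex.exp ((π:ℂ) * u * Complex.I) ^ 2 - Complex.exp ((π:ℂ) * v * Complex.I) ^ 2 ≠ 0 := by
  intro hz
  rw [sub_eq_zero, sq, sq, ← Complex.exp_add, ← Complex.exp_add,
    Complex.exp_eq_exp_iff_exists_int] at hz
  obtain ⟨n, hn⟩ := hz
  have key : ((2:ℂ) * π * Complex.I) * ((u:ℂ) - v - n) = 0 := by linear_combination hn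
  have hπI : ((2:ℂ) * π * Complex.I) ≠ 0 := by
    refine mul_ne_zero (mul_ne_zero two_ne_zero ?_) Complex.I_ne_zero
    exact_mod_cast Real.pi_ne_zero
  have h0 : ((u:ℂ) - v - n) = 0 := (mul_eq_zero.mp key).resolve_left hπI
  have : u - v - (n:ℝ) = 0 := by exact_mod_cast h0
  exact h n (by linarith)

set_option maxHeartbeats 2000000 in
private lemma trig_cauchy_aux (n : ℕ) (a2 : ℝ) (b c : Fin (n+1) → ℝ)
    (h1 : ∀ i j, ∀ nn : ℤ, a2 + b i - c j ≠ nn)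
    (h2 : ∀ i j, i ≠ j → ∀ nn : ℤ, b i - b j ≠ nn)
    (h3 : ∀ i j, i ≠ j → ∀ nn : ℤ, c i - c j ≠ nn) :
    (Matrix.of fun i j => 1 / Real.sin (π * (a2 + b i - c j))) *
      (Matrix.of fun i j =>
        ((∏ k, Real.sin (π * (a2 + b k - c i))) /
          ∏ k ∈ Finset.univ.erase i, Real.sin (π * (c k - c i))) *
        ((∏ k, Real.sin (π * (a2 + b j - c k))) /
          ∏ k ∈ Finset.univ.erase j, Real.sin (π * (b j - b k))) /
          Real.sin (π * (a2 + b j - c i))) = 1 := by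
  have cauchy_sum := fun {F : Type} [Field F] {m : ℕ} => @cauchy_sum' F _ m
  set eA : ℂ := Complex.exp ((π:ℂ) * a2 * Complex.I) with heA
  set eB : Fin (n+1) → ℂ := fun l => Complex.exp ((π:ℂ) * (b l) * Complex.I) with heB
  set eC : Fin (n+1) → ℂ := fun l => Complex.exp ((π:ℂ) * (c l) * Complex.I) with heC
  have hA : eA ≠ 0 := Complex.exp_ne_zero _
  have hB : ∀ l, eB l ≠ 0 := fun l => Complex.exp_ne_zero _
  have hC : ∀ l, eC l ≠ 0 := fun l => Complex.exp_ne_zero _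
  have hAB : ∀ l, Complex.exp ((π:ℂ) * ↑(a2 + b l) * Complex.I) = eA * eB l := by
    intro l
    rw [heA, heB, ← Complex.exp_add]
    congr 1
    push_cast
    ring
  -- the three sin evaluations
  have hs1 : ∀ l j, (Real.sin (π * (a2 + b l - c j)) : ℂ) =
      (eA ^ 2 * eB l ^ 2 - eC j ^ 2) / (2 * Complex.I * (eA * eB l * eC j)) := by
    intro l j
    rw [sin_pi_sub_eq (a2 + b l) (c j), hAB l]
    ring
  have hs2 : ∀ l j, (Real.sin (π * (c l - c j)) : ℂ) =
      (eC l ^ 2 - eC j ^ 2) / (2 * Complex.I * (eC l * eC j)) := fun l j =>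
    sin_pi_sub_eq (c l) (c j)
  have hs3 : ∀ k l, (Real.sin (π * (b k - b l)) : ℂ) =
      (eB k ^ 2 - eB l ^ 2) / (2 * Complex.I * (eB k * eB l)) := fun k l =>
    sin_pi_sub_eq (b k) (b l)
  -- nonvanishing
  have hne1 : ∀ l j, eA ^ 2 * eB l ^ 2 - eC j ^ 2 ≠ 0 := by
    intro l j
    have := exp_sq_sub_ne (a2 + b l) (c j) (h1 l j)
    rw [hAB l, mul_pow] at this
    exact this
  have hne2 : ∀ ⦃l j⦄, l ≠ j → eC l ^ 2 - eC j ^ 2 ≠ 0 := fun l j hlj =>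
    exp_sq_sub_ne (c l) (c j) (h3 l j hlj)
  have hne3 : ∀ ⦃k l⦄, k ≠ l → eB k ^ 2 - eB l ^ 2 ≠ 0 := fun k l hkl =>
    exp_sq_sub_ne (b k) (b l) (h2 k l hkl)
  have hCer : ∀ j, ∏ l ∈ univ.erase j, eC l = (∏ l, eC l) / eC j := by
    intro j
    rw [eq_div_iff (hC j)]
    exact Finset.prod_erase_mul _ _ (mem_univ j)
  have hBer : ∀ k, ∏ l ∈ univ.erase k, eB l = (∏ l, eB l) / eB k := by
    intro k
    rw [eq_div_iff (hB k)]
    exact Finset.prod_erase_mul _ _ (mem_univ k)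
  ext i k
  apply Complex.ofReal_injective
  rw [Matrix.mul_apply]
  simp only [Matrix.of_apply, Matrix.one_apply, Complex.ofReal_sum, Complex.ofReal_mul,
    Complex.ofReal_div, Complex.ofReal_one, Complex.ofReal_zero, Complex.ofReal_prod,
    apply_ite (Complex.ofReal : ℝ → ℂ)]
  have hP1 : ∀ j, ∏ l ∈ univ.erase k, ((eC j)^2 - eA^2*(eB l)^2) =
      (-1)^n * (∏ l, (eA^2*(eB l)^2 - (eC j)^2)) / (eA^2*(eB k)^2 - (eC j)^2) := by
    intro j
    rw [eq_div_iff (hne1 k j), ← Finset.prod_erase_mul univ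
      (fun l => eA^2*(eB l)^2 - (eC j)^2) (mem_univ k)]
    rw [show (∏ l ∈ univ.erase k, ((eC j)^2 - eA^2*(eB l)^2)) =
        ∏ l ∈ univ.erase k, (-1) * (eA^2*(eB l)^2 - (eC j)^2) from
      Finset.prod_congr rfl fun l _ => by ring]
    rw [Finset.prod_mul_distrib, Finset.prod_const,
      Finset.card_erase_of_mem (mem_univ k), Finset.card_univ, Fintype.card_fin,
      Nat.add_sub_cancel]
    ring
  have hP2 : ∀ j, ∏ l ∈ univ.erase j, ((eC j)^2 - (eC l)^2) =
      (-1)^n * ∏ l ∈ univ.erase j, ((eC l)^2 - (eC j)^2) := by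
    intro j
    rw [show (∏ l ∈ univ.erase j, ((eC j)^2 - (eC l)^2)) =
        ∏ l ∈ univ.erase j, (-1) * ((eC l)^2 - (eC j)^2) from
      Finset.prod_congr rfl fun l _ => by ring]
    rw [Finset.prod_mul_distrib, Finset.prod_const,
      Finset.card_erase_of_mem (mem_univ j), Finset.card_univ, Fintype.card_fin,
      Nat.add_sub_cancel]
  have hN1 : ∀ j, (∏ l, (eA^2*(eB l)^2 - (eC j)^2)) ≠ 0 :=
    fun j => Finset.prod_ne_zero_iff.mpr fun l _ => hne1 l j
  have hN2 : ∀ j, (∏ l ∈ univ.erase j, ((eC l)^2 - (eC j)^2)) ≠ 0 :=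
    fun j => Finset.prod_ne_zero_iff.mpr fun l hl => hne2 (mem_erase.mp hl).1
  have hN3 : (∏ l, (eA^2*(eB k)^2 - (eC l)^2)) ≠ 0 :=
    Finset.prod_ne_zero_iff.mpr fun l _ => hne1 k l
  have hN4 : (∏ l ∈ univ.erase k, ((eB k)^2 - (eB l)^2)) ≠ 0 :=
    Finset.prod_ne_zero_iff.mpr fun l hl => hne3 (mem_erase.mp hl).1.symm
  have key : ∀ j, (1 / (Real.sin (π * (a2 + b i - c j)) : ℂ)) *
      ((((∏ l, (Real.sin (π * (a2 + b l - c j)) : ℂ)) /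
          ∏ l ∈ Finset.univ.erase j, (Real.sin (π * (c l - c j)) : ℂ)) *
        ((∏ l, (Real.sin (π * (a2 + b k - c l)) : ℂ)) /
          ∏ l ∈ Finset.univ.erase k, (Real.sin (π * (b k - b l)) : ℂ))) /
          (Real.sin (π * (a2 + b k - c j)) : ℂ)) =
      ((eB i / eB k) * ((∏ l, (eA^2*(eB k)^2 - (eC l)^2)) /
          ((eA^2)^n * ∏ l ∈ univ.erase k, ((eB k)^2 - (eB l)^2)))) *
        ((∏ l ∈ univ.erase k, ((eC j)^2 - eA^2*(eB l)^2)) /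
          ((∏ l ∈ univ.erase j, ((eC j)^2 - (eC l)^2)) * (eA^2*(eB i)^2 - (eC j)^2))) := by
    intro j
    simp only [hs1, hs2, hs3, hP1, hP2]
    rw [Finset.prod_div_distrib, Finset.prod_div_distrib, Finset.prod_div_distrib,
      Finset.prod_div_distrib]
    simp only [Finset.prod_mul_distrib, Finset.prod_const, hCer, hBer,
      Finset.card_erase_of_mem (mem_univ j), Finset.card_erase_of_mem (mem_univ k),
      Finset.card_univ, Fintype.card_fin, Nat.add_sub_cancel]
    have hI : Complex.I ≠ 0 := Complex.I_ne_zero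
    have hPB : (∏ l, eB l) ≠ 0 := Finset.prod_ne_zero_iff.mpr fun l _ => hB l
    have hPC : (∏ l, eC l) ≠ 0 := Finset.prod_ne_zero_iff.mpr fun l _ => hC l
    have hSi := hne1 i j
    have hSk := hne1 k j
    have hn1 := hN1 j
    have hn2 := hN2 j
    have hBi := hB i
    have hBk := hB k
    have hCj := hC j
    field_simp
    ring
  have hcs : ∑ j, (∏ l ∈ univ.erase k, ((eC j)^2 - eA^2*(eB l)^2)) /
        ((∏ l ∈ univ.erase j, ((eC j)^2 - (eC l)^2)) * (eA^2*(eB i)^2 - (eC j)^2))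
      = (∏ l ∈ univ.erase k, (eA^2*(eB i)^2 - eA^2*(eB l)^2)) /
        ∏ l, (eA^2*(eB i)^2 - (eC l)^2) :=
    cauchy_sum (fun l => eA^2*(eB l)^2) (fun l => (eC l)^2)
      (fun l j => hne1 l j) (fun l j hlj => hne2 hlj) i k
  rw [Finset.sum_congr rfl fun j _ => key j, ← Finset.mul_sum, hcs]
  by_cases hik : i = k
  · subst hik
    simp only [if_pos rfl]
    have hxx : ∏ l ∈ univ.erase i, (eA^2*(eB i)^2 - eA^2*(eB l)^2)
        = (eA^2)^n * ∏ l ∈ univ.erase i, ((eB i)^2 - (eB l)^2) := by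
      rw [show (∏ l ∈ univ.erase i, (eA^2*(eB i)^2 - eA^2*(eB l)^2)) =
          ∏ l ∈ univ.erase i, eA^2 * ((eB i)^2 - (eB l)^2) from
        Finset.prod_congr rfl fun l _ => by ring]
      rw [Finset.prod_mul_distrib, Finset.prod_const,
        Finset.card_erase_of_mem (mem_univ i), Finset.card_univ, Fintype.card_fin,
        Nat.add_sub_cancel]
    rw [hxx]
    field_simp
    rw [if_pos trivial]
    exact div_self (mul_ne_zero (hB i) (by simpa only [mul_comm] using hN3))
  · simp only [if_neg hik]
    have h0 : ∏ l ∈ univ.erase k, (eA^2*(eB i)^2 - eA^2*(eB l)^2) = 0 :=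
      Finset.prod_eq_zero (mem_erase.mpr ⟨hik, mem_univ i⟩) (by ring)
    rw [h0]
    simp

end AuxLemmas

/-- The trigonometric Cauchy identity. -/
theorem trigonometric_cauchy_identity (m : ℕ) (a2 : ℝ) (b c : Fin m → ℝ)
    (h1 : ∀ i j, ∀ n : ℤ, a2 + b i - c j ≠ n)
    (h2 : ∀ i j, i ≠ j → ∀ n : ℤ, b i - b j ≠ n)
    (h3 : ∀ i j, i ≠ j → ∀ n : ℤ, c i - c j ≠ n) :
    letI μ : Fin m → ℝ := fun i =>
      (∏ k, Real.sin (π * (a2 + b k - c i))) /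
        ∏ k ∈ Finset.univ.erase i, Real.sin (π * (c k - c i))
    letI ν : Fin m → ℝ := fun i =>
      (∏ k, Real.sin (π * (a2 + b i - c k))) /
        ∏ k ∈ Finset.univ.erase i, Real.sin (π * (b i - b k))
    letI D : Matrix (Fin m) (Fin m) ℝ :=
      Matrix.of fun i j => 1 / Real.sin (π * (a2 + b i - c j))
    letI Dinv : Matrix (Fin m) (Fin m) ℝ :=
      Matrix.of fun i j => μ i * ν j / Real.sin (π * (a2 + b j - c i))
    D * Dinv = 1 ∧ Dinv * D = 1 := by
  obtain _ | n := m
  · constructor <;> · ext i j; exact i.elim0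
  · have h := trig_cauchy_aux n a2 b c h1 h2 h3
    exact ⟨h, mul_eq_one_comm.mp h⟩
end

section
/- Let $b_1,\dots,b_m$ be pairwise distinct complex numbers and $\tau_1,\tau_2$ complex numbers such that $b_j - b_i + \tau$ is nonzero for all $i,j$ and each $\tau \in \{\tau_1, \tau_2, \tau_1+\tau_2\}$. Define $\xi_j^2(\tau) = \prod_{k=1}^m (b_j-b_k+\tau)/\prod_{k\ne j}(b_j-b_k)$ and $EX(\tau)_{ij} = \xi_j^2(\tau)/(b_j-b_i+\tau)$. Then $EX(\tau_1)\,EX(\tau_2) = EX(\tau_1+\tau_2)$. -/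
open Finset Polynomial

lemma aux_coeff_sum_nodalWeight {F : Type*} [Field F] {ι : Type*} [DecidableEq ι]
    {s : Finset ι} {v : ι → F} (hvs : Set.InjOn v s) {f : F[X]}
    (hf : f.degree < #s) :
    ∑ i ∈ s, Lagrange.nodalWeight s v i * f.eval (v i) = f.coeff (#s - 1) := by
  conv_rhs => rw [Lagrange.eq_interpolate hvs hf]
  rw [Lagrange.interpolate_apply, finset_sum_coeff]
  refine (Finset.sum_congr rfl fun i hi => ?_).symm
  rw [Lagrange.basis_eq_prod_sub_inv_mul_nodal_div hi, ← Lagrange.nodal_erase_eq_nodal_div hi,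
    ← mul_assoc, ← C_mul, coeff_C_mul]
  have hdeg : (Lagrange.nodal (s.erase i) v).natDegree = #s - 1 := by
    rw [Lagrange.natDegree_nodal, card_erase_of_mem hi]
  have hm := (Lagrange.nodal_monic (s := s.erase i) (v := v)).coeff_natDegree
  rw [hdeg] at hm
  rw [hm, mul_one, mul_comm]

lemma aux_sum_nodalWeight_inv {F : Type*} [Field F] {ι : Type*} [DecidableEq ι]
    {s : Finset ι} {v : ι → F} (hvs : Set.InjOn v s) (hs : s.Nonempty) {x : F}
    (hx : ∀ i ∈ s, x ≠ v i) :
    ∑ i ∈ s, Lagrange.nodalWeight s v i * (x - v i)⁻¹ = (∏ i ∈ s, (x - v i))⁻¹ := by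
  have h1 := Lagrange.eval_interpolate_not_at_node (s := s) (v := v) 1 hx
  rw [Lagrange.interpolate_one hvs hs, eval_one, Lagrange.eval_nodal] at h1
  simp only [Pi.one_apply, mul_one] at h1
  exact (inv_eq_of_mul_eq_one_right h1.symm).symm

/-- The matrices `EX τ` form a one-parameter group. -/
theorem EX_one_parameter_group (m : ℕ) (b : Fin m → ℂ) (hb : Function.Injective b)
    (τ₁ τ₂ : ℂ)
    (h : ∀ i j : Fin m, ∀ τ ∈ ({τ₁, τ₂, τ₁ + τ₂} : Set ℂ), b j - b i + τ ≠ 0) :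
    letI ξ : ℂ → Fin m → ℂ := fun τ j =>
      (∏ k, (b j - b k + τ)) / ∏ k ∈ Finset.univ.erase j, (b j - b k)
    letI EX : ℂ → Matrix (Fin m) (Fin m) ℂ := fun τ =>
      Matrix.of fun i j => ξ τ j / (b j - b i + τ)
    EX τ₁ * EX τ₂ = EX (τ₁ + τ₂) := by
  ext i j
  rw [Matrix.mul_apply]
  simp only [Matrix.of_apply]
  have hm : 0 < m := i.pos
  have hinj : Set.InjOn b (univ : Finset (Fin m)) := hb.injOn
  have hcard : #(univ : Finset (Fin m)) = m := by simp
  -- basic nonvanishing facts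
  have hW : ∀ k : Fin m, (∏ l ∈ univ.erase k, (b k - b l)) ≠ 0 := by
    intro k
    refine prod_ne_zero_iff.mpr fun l hl => sub_ne_zero.mpr ?_
    exact fun e => (mem_erase.mp hl).1 (hb e.symm)
  have hu : ∀ k : Fin m, b k - b i + τ₁ ≠ 0 := fun k => h i k τ₁ (by simp)
  have ht : ∀ k : Fin m, b j - b k + τ₂ ≠ 0 := fun k => h k j τ₂ (by simp)
  have hD : b j - b i + (τ₁ + τ₂) ≠ 0 := h i j (τ₁ + τ₂) (by simp)
  have hC2 : (∏ l, (b j - b l + τ₂)) ≠ 0 := prod_ne_zero_iff.mpr fun l _ => h l j τ₂ (by simp)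
  -- the polynomials
  set P : Polynomial ℂ := Lagrange.nodal univ (fun l => b l - τ₁) with hPdef
  set Q : Polynomial ℂ := Lagrange.nodal (univ.erase i) (fun l => b l - τ₁) with hQdef
  set c : ℂ := b j + τ₂ with hcdef
  set R : Polynomial ℂ := P /ₘ (X - C c) with hRdef
  have hPev : ∀ x : ℂ, P.eval x = ∏ l, (x - b l + τ₁) := by
    intro x
    rw [hPdef, Lagrange.eval_nodal]
    exact prod_congr rfl fun l _ => by ring
  have hPQ : ∀ x : ℂ, P.eval x = (x - b i + τ₁) * Q.eval x := by
    intro x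
    rw [hPdef, hQdef, Lagrange.nodal_eq_mul_nodal_erase (mem_univ i)]
    simp only [eval_mul, eval_sub, eval_X, eval_C]
    ring
  have hPnat : P.natDegree = m := by rw [hPdef, Lagrange.natDegree_nodal, hcard]
  have hP0 : P ≠ 0 := Lagrange.nodal_monic.ne_zero
  -- S1
  have hQdeg : Q.degree < (#(univ : Finset (Fin m)) : WithBot ℕ) := by
    rw [hQdef, Lagrange.degree_nodal, card_erase_of_mem (mem_univ i), hcard]
    exact_mod_cast Nat.sub_lt hm one_pos
  have hS1 : ∑ k, Lagrange.nodalWeight univ b k * Q.eval (b k) = 1 := by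
    rw [aux_coeff_sum_nodalWeight hinj hQdeg, hcard]
    have hn : Q.natDegree = m - 1 := by
      rw [hQdef, Lagrange.natDegree_nodal, card_erase_of_mem (mem_univ i), hcard]
    rw [← hn]
    exact Lagrange.nodal_monic.coeff_natDegree
  -- facts about R
  have hRnat : R.natDegree = m - 1 := by
    rw [hRdef, natDegree_divByMonic P (monic_X_sub_C c), hPnat, natDegree_X_sub_C]
  have hRlead : R.coeff (m - 1) = 1 := by
    have hdeg0 : P.degree ≠ 0 := by
      rw [degree_eq_natDegree hP0, hPnat]
      exact_mod_cast hm.ne'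
    have := leadingCoeff_divByMonic_X_sub_C P hdeg0 c
    rw [← hRdef] at this
    rw [← hRnat, ← leadingCoeff, this, Lagrange.nodal_monic]
  have hRdeg : R.degree < (#(univ : Finset (Fin m)) : WithBot ℕ) := by
    refine lt_of_le_of_lt (degree_le_natDegree) ?_
    rw [hRnat, hcard]
    exact_mod_cast Nat.sub_lt hm one_pos
  have hSR : ∑ k, Lagrange.nodalWeight univ b k * R.eval (b k) = 1 := by
    rw [aux_coeff_sum_nodalWeight hinj hRdeg, hcard, hRlead]
  -- division with remainder at c
  have hkey : ∀ x : ℂ, P.eval x = P.eval c + (x - c) * R.eval x := by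
    intro x
    conv_lhs => rw [← modByMonic_add_div P (X - C c)]
    rw [modByMonic_X_sub_C_eq_C_eval]
    simp only [eval_add, eval_mul, eval_sub, eval_X, eval_C, hRdef]
  -- the inverse-sum identity at c
  have hxc : ∀ k ∈ (univ : Finset (Fin m)), c ≠ b k := by
    intro k _
    have := ht k
    intro e
    apply this
    rw [hcdef] at e
    linear_combination e
  have hinvsum : ∑ k, Lagrange.nodalWeight univ b k * (c - b k)⁻¹ =
      (∏ l, (b j - b l + τ₂))⁻¹ := by
    rw [aux_sum_nodalWeight_inv hinj (univ_nonempty_iff.mpr ⟨i⟩) hxc]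
    congr 1
    exact prod_congr rfl fun l _ => by rw [hcdef]; ring
  have hPc : P.eval c = ∏ l, (b j - b l + (τ₁ + τ₂)) := by
    rw [hPev]
    exact prod_congr rfl fun l _ => by rw [hcdef]; ring
  -- S2
  have hS2 : ∑ k, Lagrange.nodalWeight univ b k * (P.eval (b k) * (b j - b k + τ₂)⁻¹)
      = (∏ l, (b j - b l + (τ₁ + τ₂))) * (∏ l, (b j - b l + τ₂))⁻¹ - 1 := by
    have step : ∀ k : Fin m, Lagrange.nodalWeight univ b k * (P.eval (b k) * (b j - b k + τ₂)⁻¹)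
        = P.eval c * (Lagrange.nodalWeight univ b k * (c - b k)⁻¹)
          - Lagrange.nodalWeight univ b k * R.eval (b k) := by
      intro k
      have htk : b j - b k + τ₂ ≠ 0 := ht k
      have hck : c - b k = b j - b k + τ₂ := by rw [hcdef]; ring
      rw [hkey (b k), hck]
      field_simp
      ring
    rw [sum_congr rfl fun k _ => step k, sum_sub_distrib, ← mul_sum, hinvsum, hSR, hPc]
  -- now the matrix entry computation
  have hwk : ∀ k : Fin m, Lagrange.nodalWeight univ b k
      = (∏ l ∈ univ.erase k, (b k - b l))⁻¹ := by
    intro k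
    rw [Lagrange.nodalWeight, prod_inv_distrib]
  have step2 : ∀ k : Fin m,
      ((∏ l, (b k - b l + τ₁)) / (∏ l ∈ univ.erase k, (b k - b l)) / (b k - b i + τ₁))
        * ((∏ l, (b j - b l + τ₂)) / (∏ l ∈ univ.erase j, (b j - b l)) / (b j - b k + τ₂))
      = ((∏ l, (b j - b l + τ₂)) / (∏ l ∈ univ.erase j, (b j - b l)) / (b j - b i + (τ₁ + τ₂)))
        * (Lagrange.nodalWeight univ b k * Q.eval (b k)
           + Lagrange.nodalWeight univ b k * (P.eval (b k) * (b j - b k + τ₂)⁻¹)) := by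
    intro k
    have huk := hu k
    have htk := ht k
    have hWk := hW k
    have hWj := hW j
    have hfac : (∏ l, (b k - b l + τ₁)) = (b k - b i + τ₁) * Q.eval (b k) := by
      rw [← hPev, hPQ]
    have hsplit : b j - b i + (τ₁ + τ₂) = (b k - b i + τ₁) + (b j - b k + τ₂) := by ring
    rw [hfac, hwk k, hsplit]
    have hsum : (b k - b i + τ₁) + (b j - b k + τ₂) ≠ 0 := by rw [← hsplit]; exact hD
    rw [hPQ (b k)]
    field_simp
    ring
  rw [sum_congr rfl fun k _ => step2 k, ← mul_sum, sum_add_distrib, hS1, hS2]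
  show ((∏ l, (b j - b l + τ₂)) / (∏ l ∈ univ.erase j, (b j - b l)) / (b j - b i + (τ₁ + τ₂)))
      * _ = (∏ l, (b j - b l + (τ₁ + τ₂))) / (∏ l ∈ univ.erase j, (b j - b l))
        / (b j - b i + (τ₁ + τ₂))
  have hWj := hW j
  field_simp
  ring
end

section
/- With notation as above ($b_i$ pairwise distinct, $c_i$ pairwise distinct, all $b_j-c_k+a_2+\tau_i$ and differences nonzero as needed), define $Z(\tau)_{ij} = \nu_j^2(\tau)/(b_j-c_i+a_2+\tau)$ and $EX(\tau)_{ij} = \xi_j^2(\tau)/(b_j-b_i+\tau)$, where $\nu_j^2(\tau) = \prod_k(a_2+b_j-c_k+\tau)/\prod_{k\ne j}(b_j-b_k)$ and $\xi_j^2(\tau) = \prod_k(b_j-b_k+\tau)/\prod_{k\ne j}(b_j-b_k)$. Then $Z^{-1}(\tau_1)\,Z(\tau_2) = EX(\tau_2-\tau_1)$, where $Z^{-1}(\tau)_{ij} = \mu_j^2(\tau)/(b_i-c_j+a_2+\tau)$ with $\mu_j^2(\tau) = \prod_k(a_2+b_k-c_j+\tau)/\prod_{k\ne j}(c_k-c_j)$.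 -/
open Finset

lemma lagrange_sum_eval {m : ℕ} (u : Fin m → ℂ) (hu : Function.Injective u)
    (P : Polynomial ℂ) (hP : P.degree < (m : ℕ)) (x : ℂ) :
    ∑ l, P.eval (u l) * ∏ k ∈ Finset.univ.erase l, ((u l - u k)⁻¹ * (x - u k)) = P.eval x := by
  have h := Lagrange.eq_interpolate (s := (Finset.univ : Finset (Fin m))) (v := u)
      hu.injOn (by simpa using hP)
  conv_rhs => rw [h]
  rw [Lagrange.interpolate_apply, Polynomial.eval_finset_sum]
  refine Finset.sum_congr rfl fun l _ => ?_
  rw [Polynomial.eval_mul, Polynomial.eval_C, Lagrange.basis, Polynomial.eval_prod]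
  congr 1
  refine Finset.prod_congr rfl fun k hk => ?_
  simp [Lagrange.basisDivisor]

lemma prod_neg_flip {α : Type*} (s : Finset α) (f : α → ℂ) :
    ∏ k ∈ s, (-(f k)) = (-1) ^ s.card * ∏ k ∈ s, f k := by
  have : ∀ k ∈ s, -(f k) = (-1) * f k := fun k _ => by ring
  rw [Finset.prod_congr rfl this]
  rw [Finset.prod_mul_distrib, Finset.prod_const]

/-- `Z⁻¹(τ₁) Z(τ₂) = EX(τ₂ - τ₁)`. -/
theorem Zinv_mul_Z_eq_EX (m : ℕ) (a2 τ₁ τ₂ : ℂ) (b c : Fin m → ℂ)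
    (hb : Function.Injective b) (hc : Function.Injective c)
    (h1 : ∀ j k : Fin m, b j - c k + a2 + τ₁ ≠ 0)
    (h2 : ∀ j k : Fin m, b j - c k + a2 + τ₂ ≠ 0)
    (h3 : ∀ i j : Fin m, b j - b i + (τ₂ - τ₁) ≠ 0) :
    letI ν : ℂ → Fin m → ℂ := fun τ j =>
      (∏ k, (a2 + b j - c k + τ)) / ∏ k ∈ Finset.univ.erase j, (b j - b k)
    letI μ : ℂ → Fin m → ℂ := fun τ j =>
      (∏ k, (a2 + b k - c j + τ)) / ∏ k ∈ Finset.univ.erase j, (c k - c j)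
    letI ξ : ℂ → Fin m → ℂ := fun τ j =>
      (∏ k, (b j - b k + τ)) / ∏ k ∈ Finset.univ.erase j, (b j - b k)
    letI Z : ℂ → Matrix (Fin m) (Fin m) ℂ := fun τ =>
      Matrix.of fun i j => ν τ j / (b j - c i + a2 + τ)
    letI Zinv : ℂ → Matrix (Fin m) (Fin m) ℂ := fun τ =>
      Matrix.of fun i j => μ τ j / (b i - c j + a2 + τ)
    letI EX : ℂ → Matrix (Fin m) (Fin m) ℂ := fun τ =>
      Matrix.of fun i j => ξ τ j / (b j - b i + τ)
    Zinv τ₁ * Z τ₂ = EX (τ₂ - τ₁) := by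
  dsimp only
  ext i j
  rw [Matrix.mul_apply]
  simp only [Matrix.of_apply]
  -- setup
  set x : ℂ := b j + (τ₂ - τ₁) with hx
  set u : Fin m → ℂ := fun l => c l - a2 - τ₁ with hu_def
  have huL : ∀ t, u t = c t - a2 - τ₁ := fun t => rfl
  have hu : Function.Injective u := fun k l h => by
    rw [huL, huL] at h; exact hc (by linear_combination h)
  set D : ℂ := ∏ k ∈ Finset.univ.erase j, (b j - b k) with hD_def
  have hD : D ≠ 0 := Finset.prod_ne_zero_iff.mpr fun k hk =>
    sub_ne_zero.mpr fun h => (Finset.mem_erase.mp hk).1.symm (hb h)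
  set P : Polynomial ℂ := ∏ k ∈ Finset.univ.erase i, (Polynomial.X - Polynomial.C (b k)) with hP_def
  have hm : 0 < m := i.pos
  have hPdeg : P.degree < (m : ℕ) := by
    rw [hP_def, Polynomial.degree_prod]
    simp only [Polynomial.degree_X_sub_C]
    rw [Finset.sum_const, Finset.card_erase_of_mem (Finset.mem_univ i)]
    simp only [Finset.card_univ, Fintype.card_fin, nsmul_eq_mul, mul_one]
    exact_mod_cast (by omega : m - 1 < m)
  have hPeval : ∀ t : ℂ, P.eval t = ∏ k ∈ Finset.univ.erase i, (t - b k) := by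
    intro t; rw [hP_def, Polynomial.eval_prod]; simp
  have key : ∑ l, (∏ k ∈ Finset.univ.erase i, (u l - b k)) *
      ∏ k ∈ Finset.univ.erase l, ((u l - u k)⁻¹ * (x - u k)) =
      ∏ k ∈ Finset.univ.erase i, (x - b k) := by
    have := lagrange_sum_eval u hu P hPdeg x
    simpa only [hPeval] using this
  have hcard : ∀ l : Fin m, (Finset.univ.erase l).card = m - 1 := fun l => by
    rw [Finset.card_erase_of_mem (Finset.mem_univ l), Finset.card_univ, Fintype.card_fin]
  -- per-term identity
  have hterm : ∀ l : Fin m,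
      (∏ k, (a2 + b k - c l + τ₁)) / (∏ k ∈ Finset.univ.erase l, (c k - c l)) /
        (b i - c l + a2 + τ₁) *
        ((∏ k, (a2 + b j - c k + τ₂)) / D / (b j - c l + a2 + τ₂)) =
      (∏ k ∈ Finset.univ.erase i, (u l - b k)) *
        (∏ k ∈ Finset.univ.erase l, ((u l - u k)⁻¹ * (x - u k))) / D := by
    intro l
    have e1 : ∏ k, (a2 + b k - c l + τ₁) = (b i - u l) * ∏ k ∈ Finset.univ.erase i, (b k - u l) := by
      rw [show (∏ k, (a2 + b k - c l + τ₁)) = ∏ k, (b k - u l) from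
        Finset.prod_congr rfl fun k _ => by simp only [huL]; ring]
      rw [← Finset.mul_prod_erase Finset.univ _ (Finset.mem_univ i)]
    have e2 : ∏ k ∈ Finset.univ.erase l, (c k - c l) = ∏ k ∈ Finset.univ.erase l, (u k - u l) :=
      Finset.prod_congr rfl fun k _ => by simp only [huL]; ring
    have e3 : ∏ k, (a2 + b j - c k + τ₂) = (x - u l) * ∏ k ∈ Finset.univ.erase l, (x - u k) := by
      rw [show (∏ k, (a2 + b j - c k + τ₂)) = ∏ k, (x - u k) from
        Finset.prod_congr rfl fun k _ => by simp only [hx, huL]; ring]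
      rw [← Finset.mul_prod_erase Finset.univ _ (Finset.mem_univ l)]
    have e4 : b i - c l + a2 + τ₁ = b i - u l := by simp only [huL]; ring
    have e5 : b j - c l + a2 + τ₂ = x - u l := by simp only [hx, huL]; ring
    have sN : ∏ k ∈ Finset.univ.erase i, (b k - u l) =
        (-1 : ℂ) ^ (m - 1) * ∏ k ∈ Finset.univ.erase i, (u l - b k) := by
      rw [← hcard i, ← prod_neg_flip]
      exact Finset.prod_congr rfl fun k _ => by ring
    have sE : ∏ k ∈ Finset.univ.erase l, (u k - u l) =
        (-1 : ℂ) ^ (m - 1) * ∏ k ∈ Finset.univ.erase l, (u l - u k) := by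
      rw [← hcard l, ← prod_neg_flip]
      exact Finset.prod_congr rfl fun k _ => by ring
    have e6 : ∏ k ∈ Finset.univ.erase l, ((u l - u k)⁻¹ * (x - u k)) =
        (∏ k ∈ Finset.univ.erase l, (u l - u k))⁻¹ * ∏ k ∈ Finset.univ.erase l, (x - u k) := by
      rw [Finset.prod_mul_distrib, ← Finset.prod_inv_distrib]
    have hbiu : b i - u l ≠ 0 := e4 ▸ h1 i l
    have hxul : x - u l ≠ 0 := e5 ▸ h2 j l
    have hE : (∏ k ∈ Finset.univ.erase l, (u l - u k)) ≠ 0 :=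
      Finset.prod_ne_zero_iff.mpr fun k hk =>
        sub_ne_zero.mpr fun h => (Finset.mem_erase.mp hk).1 (hu h).symm
    have hs : ((-1 : ℂ)) ^ (m - 1) ≠ 0 := pow_ne_zero _ (by norm_num)
    rw [e1, e2, e3, e4, e5, sN, sE, e6]
    field_simp
  rw [Finset.sum_congr rfl fun l _ => hterm l, ← Finset.sum_div, key]
  -- right-hand side
  have e7 : ∏ k, (b j - b k + (τ₂ - τ₁)) = (x - b i) * ∏ k ∈ Finset.univ.erase i, (x - b k) := by
    rw [show (∏ k, (b j - b k + (τ₂ - τ₁))) = ∏ k, (x - b k) from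
      Finset.prod_congr rfl fun k _ => by rw [hx]; ring]
    rw [← Finset.mul_prod_erase Finset.univ _ (Finset.mem_univ i)]
  have e8 : b j - b i + (τ₂ - τ₁) = x - b i := by rw [hx]; ring
  have hxbi : x - b i ≠ 0 := e8 ▸ h3 i j
  rw [e7, e8]
  field_simp
end

section
/- Let $b_1,\dots,b_m$ be pairwise distinct complex numbers and $\tau\ne 0$. Then the matrix $M_{ij} = 1/(b_i - b_j + \tau)$ (assuming all $b_i-b_j+\tau \ne 0$) is invertible with inverse $M^{-1}_{ij} = -\xi_i^2(-\tau)\,\xi_j^2(\tau)/(b_j - b_i + \tau)$, where $\xi_i^2(\tau) = \prod_{k=1}^m (b_i-b_k+\tau)/\prod_{k\ne i}(b_i-b_k)$. -/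
open Finset Polynomial

/-- Lagrange interpolation in barycentric-ish form. -/
lemma lag_eval (m : ℕ) (b : Fin m → ℂ) (hb : Function.Injective b) (P : ℂ[X])
    (hdeg : P.degree < (m : ℕ)) (z : ℂ) (hz : ∀ j, z - b j ≠ 0) :
    P.eval z = (∏ k, (z - b k)) *
      ∑ j, (∏ k ∈ Finset.univ.erase j, (b j - b k))⁻¹ * (z - b j)⁻¹ * P.eval (b j) := by
  have hvs : Set.InjOn b (Finset.univ : Finset (Fin m)) := hb.injOn
  have hdeg' : P.degree < #(Finset.univ : Finset (Fin m)) := by simpa using hdeg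
  have hP := Lagrange.eq_interpolate hvs hdeg'
  have hx : ∀ i ∈ (Finset.univ : Finset (Fin m)), z ≠ b i := by
    intro i _ hc
    exact hz i (by rw [hc, sub_self])
  conv_lhs => rw [hP]
  rw [Lagrange.eval_interpolate_not_at_node _ hx, Lagrange.eval_nodal]
  congr 1
  apply Finset.sum_congr rfl
  intro j _
  rw [Lagrange.nodalWeight, ← Finset.prod_inv_distrib]

lemma key_sum (m : ℕ) (b : Fin m → ℂ) (hb : Function.Injective b) (τ : ℂ)
    (h : ∀ i j : Fin m, b i - b j + τ ≠ 0) (i : Fin m) :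
    ∑ j, ((∏ k, (b j - b k - τ)) / ∏ k ∈ Finset.univ.erase j, (b j - b k))
      * (b i - b j + τ)⁻¹ = -1 := by
  have hA' : ∀ j : Fin m, (∏ k ∈ Finset.univ.erase j, (b j - b k)) ≠ 0 := by
    intro j
    refine Finset.prod_ne_zero_iff.mpr fun k hk => sub_ne_zero_of_ne ?_
    exact fun hc => (Finset.mem_erase.mp hk).1 (hb hc.symm)
  set z : ℂ := b i + τ with hzdef
  have hz : ∀ j, z - b j ≠ 0 := by
    intro j hc
    exact h i j (by linear_combination hc)
  have hAZ : (∏ k, (z - b k)) ≠ 0 := Finset.prod_ne_zero_iff.mpr fun k _ => hz k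
  set P : ℂ[X] := Lagrange.nodal Finset.univ (fun k => b k + τ) - Lagrange.nodal Finset.univ b
    with hP
  have hdeg : P.degree < (m : ℕ) := by
    have h1 : (Lagrange.nodal Finset.univ (fun k => b k + τ)).degree
        = #(Finset.univ : Finset (Fin m)) := Lagrange.degree_nodal
    have h2 : (Lagrange.nodal (Finset.univ : Finset (Fin m)) b).degree
        = #(Finset.univ : Finset (Fin m)) := Lagrange.degree_nodal
    have := Polynomial.degree_sub_lt (h1.trans h2.symm) Lagrange.nodal_ne_zero
      ((Lagrange.nodal_monic).leadingCoeff.trans (Lagrange.nodal_monic).leadingCoeff.symm)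
    rw [← hP] at this
    calc P.degree < _ := this
    _ = ((m : ℕ) : WithBot ℕ) := by rw [h1]; simp
  have hlag := lag_eval m b hb P hdeg z hz
  have hevz : P.eval z = -∏ k, (z - b k) := by
    rw [hP, Polynomial.eval_sub, Lagrange.eval_nodal, Lagrange.eval_nodal]
    rw [Finset.prod_eq_zero (Finset.mem_univ i) (by rw [hzdef]; ring)]
    ring
  have hevb : ∀ j : Fin m, P.eval (b j) = ∏ k, (b j - b k - τ) := by
    intro j
    rw [hP, Polynomial.eval_sub, Lagrange.eval_nodal, Lagrange.eval_nodal]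
    have hz2 : (∏ k, (b j - b k)) = 0 :=
      Finset.prod_eq_zero (Finset.mem_univ j) (by ring)
    rw [hz2, sub_zero]
    exact Finset.prod_congr rfl fun k _ => by ring
  rw [hevz] at hlag
  have hsum : ∑ j, (∏ k ∈ Finset.univ.erase j, (b j - b k))⁻¹ * (z - b j)⁻¹ * P.eval (b j)
      = -1 := by
    apply mul_left_cancel₀ hAZ
    rw [← hlag]; ring
  rw [← hsum]
  apply Finset.sum_congr rfl
  intro j _
  rw [hevb j]
  have : b i - b j + τ = z - b j := by rw [hzdef]; ring
  rw [this, div_eq_mul_inv]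
  ring

lemma key_sum2 (m : ℕ) (b : Fin m → ℂ) (hb : Function.Injective b) (τ : ℂ)
    (h : ∀ i j : Fin m, b i - b j + τ ≠ 0) (i : Fin m) :
    ∑ j, ((∏ k, (b j - b k - τ)) / ∏ k ∈ Finset.univ.erase j, (b j - b k))
      * ((b i - b j + τ)⁻¹) ^ 2
      = -(∏ k ∈ Finset.univ.erase i, (b i - b k)) / ∏ k, (b i - b k + τ) := by
  have hA' : ∀ j : Fin m, (∏ k ∈ Finset.univ.erase j, (b j - b k)) ≠ 0 := by
    intro j
    refine Finset.prod_ne_zero_iff.mpr fun k hk => sub_ne_zero_of_ne ?_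
    exact fun hc => (Finset.mem_erase.mp hk).1 (hb hc.symm)
  set z : ℂ := b i + τ with hzdef
  have hz : ∀ j, z - b j ≠ 0 := by
    intro j hc
    exact h i j (by linear_combination hc)
  have hAZ : (∏ k, (z - b k)) ≠ 0 := Finset.prod_ne_zero_iff.mpr fun k _ => hz k
  set P : ℂ[X] := Lagrange.nodal (Finset.univ.erase i) (fun k => b k + τ) with hP
  have hdeg : P.degree < (m : ℕ) := by
    have h1 : P.degree = #(Finset.univ.erase i) := Lagrange.degree_nodal
    rw [h1, Finset.card_erase_of_mem (Finset.mem_univ i), Finset.card_univ, Fintype.card_fin]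
    exact_mod_cast Nat.sub_lt (Fin.pos i) zero_lt_one
  have hlag := lag_eval m b hb P hdeg z hz
  have hevz : P.eval z = ∏ k ∈ Finset.univ.erase i, (b i - b k) := by
    rw [hP, Lagrange.eval_nodal]
    exact Finset.prod_congr rfl fun k _ => by rw [hzdef]; ring
  have hevb : ∀ j : Fin m, P.eval (b j) = ∏ k ∈ Finset.univ.erase i, (b j - b k - τ) := by
    intro j
    rw [hP, Lagrange.eval_nodal]
    exact Finset.prod_congr rfl fun k _ => by ring
  rw [hevz] at hlag
  have hterm : ∀ j : Fin m,
      ((∏ k, (b j - b k - τ)) / ∏ k ∈ Finset.univ.erase j, (b j - b k))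
        * ((b i - b j + τ)⁻¹) ^ 2
      = -((∏ k ∈ Finset.univ.erase j, (b j - b k))⁻¹ * (z - b j)⁻¹ * P.eval (b j)) := by
    intro j
    have hsplit : (∏ k, (b j - b k - τ))
        = (b j - b i - τ) * ∏ k ∈ Finset.univ.erase i, (b j - b k - τ) :=
      (Finset.mul_prod_erase Finset.univ _ (Finset.mem_univ i)).symm
    rw [hevb j, hsplit]
    have h1 : b j - b i - τ = -(z - b j) := by rw [hzdef]; ring
    have h2 : b i - b j + τ = z - b j := by rw [hzdef]; ring
    rw [h1, h2]
    field_simp [hz j, hA' j]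
  calc ∑ j, ((∏ k, (b j - b k - τ)) / ∏ k ∈ Finset.univ.erase j, (b j - b k))
        * ((b i - b j + τ)⁻¹) ^ 2
      = -∑ j, (∏ k ∈ Finset.univ.erase j, (b j - b k))⁻¹ * (z - b j)⁻¹ * P.eval (b j) := by
        rw [← Finset.sum_neg_distrib]
        exact Finset.sum_congr rfl fun j _ => hterm j
    _ = -(∏ k ∈ Finset.univ.erase i, (b i - b k)) / ∏ k, (b i - b k + τ) := by
        have hAZ' : (∏ k, (b i - b k + τ)) = ∏ k, (z - b k) :=
          Finset.prod_congr rfl fun k _ => by rw [hzdef]; ring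
        have hS : (∑ j, (∏ k ∈ Finset.univ.erase j, (b j - b k))⁻¹ * (z - b j)⁻¹ * P.eval (b j))
            = (∏ k ∈ Finset.univ.erase i, (b i - b k)) / ∏ k, (z - b k) := by
          rw [eq_div_iff hAZ, hlag]; ring
        rw [hAZ', hS, neg_div]


/-- Special case of the rational Cauchy identity: inverse of the matrix
`M_{ij} = 1/(b_i - b_j + τ)`. -/
theorem cauchy_special_inverse (m : ℕ) (b : Fin m → ℂ) (hb : Function.Injective b)
    (τ : ℂ) (hτ : τ ≠ 0) (h : ∀ i j : Fin m, b i - b j + τ ≠ 0) :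
    letI ξ : ℂ → Fin m → ℂ := fun t i =>
      (∏ k, (b i - b k + t)) / ∏ k ∈ Finset.univ.erase i, (b i - b k)
    letI M : Matrix (Fin m) (Fin m) ℂ := Matrix.of fun i j => 1 / (b i - b j + τ)
    letI Minv : Matrix (Fin m) (Fin m) ℂ :=
      Matrix.of fun i j => -(ξ (-τ) i * ξ τ j) / (b j - b i + τ)
    M * Minv = 1 ∧ Minv * M = 1 := by
  have key : (Matrix.of fun i j => (1 : ℂ) / (b i - b j + τ)) *
      (Matrix.of fun i j : Fin m =>
        -(((∏ k, (b i - b k + -τ)) / ∏ k ∈ Finset.univ.erase i, (b i - b k)) *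
          ((∏ k, (b j - b k + τ)) / ∏ k ∈ Finset.univ.erase j, (b j - b k))) /
            (b j - b i + τ)) = 1 := by
    ext i k
    rw [Matrix.mul_apply]
    simp only [Matrix.of_apply]
    have hA' : ∀ j : Fin m, (∏ k ∈ Finset.univ.erase j, (b j - b k)) ≠ 0 := by
      intro j
      refine Finset.prod_ne_zero_iff.mpr fun k hk => sub_ne_zero_of_ne ?_
      exact fun hc => (Finset.mem_erase.mp hk).1 (hb hc.symm)
    have hAZ : ∀ i : Fin m, (∏ k, (b i - b k + τ)) ≠ 0 := fun i =>
      Finset.prod_ne_zero_iff.mpr fun k _ => h i k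
    rcases eq_or_ne i k with rfl | hik
    · rw [Matrix.one_apply_eq]
      have step : ∀ j ∈ (Finset.univ : Finset (Fin m)),
          1 / (b i - b j + τ) *
            (-(((∏ k, (b j - b k + -τ)) / ∏ k ∈ Finset.univ.erase j, (b j - b k)) *
              ((∏ k, (b i - b k + τ)) / ∏ k ∈ Finset.univ.erase i, (b i - b k))) /
              (b i - b j + τ))
          = (-((∏ k, (b i - b k + τ)) / ∏ k ∈ Finset.univ.erase i, (b i - b k))) *
            (((∏ k, (b j - b k - τ)) / ∏ k ∈ Finset.univ.erase j, (b j - b k)) *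
              ((b i - b j + τ)⁻¹) ^ 2) := by
        intro j _
        have hprod : (∏ k, (b j - b k + -τ)) = ∏ k, (b j - b k - τ) :=
          Finset.prod_congr rfl fun k _ => by ring
        rw [hprod]
        field_simp [h i j, hA' j, hA' i]
      rw [Finset.sum_congr rfl step, ← Finset.mul_sum, key_sum2 m b hb τ h i]
      field_simp [hA' i, hAZ i]
    · rw [Matrix.one_apply_ne hik]
      have huv : b i - b k ≠ 0 := sub_ne_zero_of_ne fun hc => hik (hb hc)
      have step : ∀ j ∈ (Finset.univ : Finset (Fin m)),
          1 / (b i - b j + τ) *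
            (-(((∏ l, (b j - b l + -τ)) / ∏ l ∈ Finset.univ.erase j, (b j - b l)) *
              ((∏ l, (b k - b l + τ)) / ∏ l ∈ Finset.univ.erase k, (b k - b l))) /
              (b k - b j + τ))
          = (-(((∏ l, (b k - b l + τ)) / ∏ l ∈ Finset.univ.erase k, (b k - b l)) *
              (b i - b k)⁻¹)) *
            (((∏ l, (b j - b l - τ)) / ∏ l ∈ Finset.univ.erase j, (b j - b l)) *
              (b k - b j + τ)⁻¹ -
             ((∏ l, (b j - b l - τ)) / ∏ l ∈ Finset.univ.erase j, (b j - b l)) *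
              (b i - b j + τ)⁻¹) := by
        intro j _
        have hprod : (∏ l, (b j - b l + -τ)) = ∏ l, (b j - b l - τ) :=
          Finset.prod_congr rfl fun l _ => by ring
        rw [hprod]
        field_simp [h i j, h k j, hA' j, hA' k, huv]
        ring
      rw [Finset.sum_congr rfl step, ← Finset.mul_sum, Finset.sum_sub_distrib,
        key_sum m b hb τ h k, key_sum m b hb τ h i]
      ring
  exact ⟨key, mul_eq_one_comm.mp key⟩
end

section
/- Let $b_1,\dots,b_m$ and $c_1,\dots,c_m$ and $a_2$ be complex numbers with the $c_i$ pairwise distinct and $b_k - c_i + a_2 \ne 0$ for all $k,i$. Define the lower-triangular matrix $W$ by $W^j_i = (b_j-c_j+a_2)\prod_{k=1}^{j-1}(b_k-c_i+a_2)\big/\prod_{k\le j, k\ne i}(c_k-c_i)$ for $i \le j$ and $W^j_i = 0$ for $i > j$ (here $W^j_i$ is the $i$-th entry of the $j$-th column). Then its inverse is given by $W^{-1}_{ij} = \frac{1}{b_j-c_i+a_2}\prod_{k=1}^{j-1}\frac{c_k-c_i}{b_k-c_i+a_2}$ for $i\ge j$ and $0$ for $i<j$. -/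
open Finset

open Polynomial

lemma lagrange_key {F : Type*} [Field F] {ι : Type*} [DecidableEq ι] (s : Finset ι) (v : ι → F)
    (hvs : Set.InjOn v s) (f : F[X]) (hf : f.degree < ((#s - 1 : ℕ) : WithBot ℕ)) :
    ∑ i ∈ s, f.eval (v i) * ∏ j ∈ s.erase i, (v i - v j)⁻¹ = 0 := by
  have hf' : f.degree < (#s : ℕ) :=
    hf.trans_le (by exact_mod_cast Nat.sub_le _ _)
  have hinterp := Lagrange.eq_interpolate hvs hf'
  have hcoeff : f.coeff (#s - 1) = 0 := Polynomial.coeff_eq_zero_of_degree_lt hf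
  have hbasis : ∀ i ∈ s, (Lagrange.basis s v i).coeff (#s - 1)
      = ∏ j ∈ s.erase i, (v i - v j)⁻¹ := by
    intro i hi
    have hb : Lagrange.basis s v i
        = C (∏ j ∈ s.erase i, (v i - v j)⁻¹) * Lagrange.nodal (s.erase i) v := by
      rw [Lagrange.basis, Lagrange.nodal, map_prod, ← Finset.prod_mul_distrib]
      rfl
    rw [hb, Polynomial.coeff_C_mul]
    have hmono : (Lagrange.nodal (s.erase i) v).Monic := Lagrange.nodal_monic
    have hnd : (Lagrange.nodal (s.erase i) v).natDegree = #s - 1 := by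
      rw [Lagrange.natDegree_nodal, card_erase_of_mem hi]
    rw [← hnd, Polynomial.coeff_natDegree, hmono.leadingCoeff, mul_one]
  calc ∑ i ∈ s, f.eval (v i) * ∏ j ∈ s.erase i, (v i - v j)⁻¹
      = (Lagrange.interpolate s v (fun i => f.eval (v i))).coeff (#s - 1) := by
        rw [Lagrange.interpolate_apply, Polynomial.finset_sum_coeff]
        exact (Finset.sum_congr rfl fun i hi => by
          rw [Polynomial.coeff_C_mul, hbasis i hi]).symm
    _ = 0 := by rw [← hinterp]; exact hcoeff

lemma W_mul_Winv (m : ℕ) (a2 : ℂ) (b c : Fin m → ℂ)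
    (hc : Function.Injective c) (h : ∀ k i : Fin m, b k - c i + a2 ≠ 0) :
    (Matrix.of fun i j : Fin m =>
      if j ≤ i then
        (b i - c i + a2) * (∏ k ∈ Finset.univ.filter (· < i), (b k - c j + a2)) /
          ∏ k ∈ Finset.univ.filter (fun k => k ≤ i ∧ k ≠ j), (c k - c j)
      else 0) *
    (Matrix.of fun i j : Fin m =>
      if j ≤ i then
        (1 / (b j - c i + a2)) *
          ∏ k ∈ Finset.univ.filter (· < j), ((c k - c i) / (b k - c i + a2))
      else 0) = 1 := by
  ext i j
  rw [Matrix.mul_apply]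
  simp only [Matrix.of_apply]
  rcases lt_trichotomy i j with hij | rfl | hji
  · -- i < j : all terms vanish, RHS = 0
    rw [Matrix.one_apply_ne hij.ne]
    refine Finset.sum_eq_zero fun l _ => ?_
    by_cases h1 : l ≤ i
    · have h2 : ¬ j ≤ l := fun hh => absurd (hh.trans h1) (not_le.mpr hij)
      rw [if_neg h2, mul_zero]
    · rw [if_neg h1, zero_mul]
  · -- diagonal
    rw [Matrix.one_apply_eq]
    rw [Finset.sum_eq_single i]
    · rw [if_pos le_rfl, if_pos le_rfl]
      have hfe : Finset.univ.filter (fun k => k ≤ i ∧ k ≠ i) = Finset.univ.filter (· < i) := by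
        ext k; simp [lt_iff_le_and_ne]
      rw [hfe, Finset.prod_div_distrib]
      set A := b i - c i + a2 with hA
      set P := ∏ k ∈ Finset.univ.filter (· < i), (b k - c i + a2) with hP
      set Q := ∏ k ∈ Finset.univ.filter (· < i), (c k - c i) with hQ
      have hA0 : A ≠ 0 := h i i
      have hP0 : P ≠ 0 := Finset.prod_ne_zero_iff.mpr fun k _ => h k i
      have hQ0 : Q ≠ 0 := Finset.prod_ne_zero_iff.mpr fun k hk =>
        sub_ne_zero.mpr fun e => (Finset.mem_filter.mp hk).2.ne (hc e)
      field_simp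
    · intro l _ hl
      by_cases h1 : l ≤ i
      · have h2 : ¬ i ≤ l := fun hh => hl (le_antisymm h1 hh)
        rw [if_neg h2, mul_zero]
      · rw [if_neg h1, zero_mul]
    · intro hi; exact absurd (Finset.mem_univ i) hi
  · -- j < i : the interesting case
    rw [Matrix.one_apply_ne (ne_of_gt hji)]
    have hji' : (j : ℕ) < (i : ℕ) := hji
    refine Eq.trans ((Finset.sum_subset (Finset.subset_univ (Finset.Icc j i))
      (fun l _ hl => ?_)).symm) ?_
    · rw [Finset.mem_Icc, not_and_or] at hl
      rcases hl with hl | hl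
      · rw [if_neg hl, mul_zero]
      · rw [if_neg hl, zero_mul]
    set f : Polynomial ℂ := ∏ k ∈ Finset.Ioo j i, (C (b k + a2) - X) with hf
    have hdeg1 : ∀ k : Fin m, (C (b k + a2) - X : Polynomial ℂ).degree = 1 := fun k => by
      rw [show (C (b k + a2) - X : Polynomial ℂ) = -(X - C (b k + a2)) by ring,
        Polynomial.degree_neg, Polynomial.degree_X_sub_C]
    have hdeg : f.degree < ((#(Finset.Icc j i) - 1 : ℕ) : WithBot ℕ) := by
      have h1 : (∑ k ∈ Finset.Ioo j i, (C (b k + a2) - X : Polynomial ℂ).degree)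
          = (#(Finset.Ioo j i) : WithBot ℕ) := by
        rw [Finset.sum_congr rfl fun k _ => hdeg1 k, Finset.sum_const, nsmul_eq_mul, mul_one]
      rw [hf, Polynomial.degree_prod, h1]
      have : #(Finset.Ioo j i) < #(Finset.Icc j i) - 1 := by
        rw [Fin.card_Ioo, Fin.card_Icc]; omega
      exact_mod_cast this
    have hkey := lagrange_key (Finset.Icc j i) c hc.injOn f hdeg
    set n1 := #(Finset.Icc j i) - 1 with hn1
    have hterm : ∀ l ∈ Finset.Icc j i,
        (if l ≤ i then
          (b i - c i + a2) * (∏ k ∈ Finset.univ.filter (· < i), (b k - c l + a2)) /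
            ∏ k ∈ Finset.univ.filter (fun k => k ≤ i ∧ k ≠ l), (c k - c l)
        else 0) *
        (if j ≤ l then
          (1 / (b j - c l + a2)) *
            ∏ k ∈ Finset.univ.filter (· < j), ((c k - c l) / (b k - c l + a2))
        else 0) =
        ((b i - c i + a2) * ((-1 : ℂ) ^ n1)⁻¹) *
          (f.eval (c l) * ∏ k ∈ (Finset.Icc j i).erase l, (c l - c k)⁻¹) := by
      intro l hl
      obtain ⟨hjl, hli⟩ := Finset.mem_Icc.mp hl
      have hjl' : (j : ℕ) ≤ (l : ℕ) := hjl
      have hli' : (l : ℕ) ≤ (i : ℕ) := hli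
      rw [if_pos hli, if_pos hjl]
      have e1 : Finset.univ.filter (· < i) =
          (Finset.univ.filter (· < j)) ∪ insert j (Finset.Ioo j i) := by
        ext k
        simp only [Finset.mem_filter, Finset.mem_univ, true_and, Finset.mem_union,
          Finset.mem_insert, Finset.mem_Ioo, Fin.lt_def, Fin.ext_iff]
        omega
      have hd1 : Disjoint (Finset.univ.filter (· < j)) (insert j (Finset.Ioo j i)) := by
        rw [Finset.disjoint_left]
        intro k hk hk'
        simp only [Finset.mem_filter, Finset.mem_univ, true_and, Fin.lt_def] at hk
        simp only [Finset.mem_insert, Finset.mem_Ioo, Fin.lt_def, Fin.ext_iff] at hk'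
        omega
      have hjIoo : j ∉ Finset.Ioo j i := by simp
      have e2 : Finset.univ.filter (fun k => k ≤ i ∧ k ≠ l) =
          (Finset.univ.filter (· < j)) ∪ (Finset.Icc j i).erase l := by
        ext k
        simp only [Finset.mem_filter, Finset.mem_univ, true_and, Finset.mem_union,
          Finset.mem_erase, Finset.mem_Icc, Fin.lt_def, Fin.le_def, Fin.ext_iff, ne_eq]
        omega
      have hd2 : Disjoint (Finset.univ.filter (· < j)) ((Finset.Icc j i).erase l) := by
        rw [Finset.disjoint_left]
        intro k hk hk'
        simp only [Finset.mem_filter, Finset.mem_univ, true_and, Fin.lt_def] at hk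
        simp only [Finset.mem_erase, Finset.mem_Icc, Fin.le_def] at hk'
        omega
      rw [e1, Finset.prod_union hd1, Finset.prod_insert hjIoo, e2, Finset.prod_union hd2,
        Finset.prod_div_distrib]
      have hev : f.eval (c l) = ∏ k ∈ Finset.Ioo j i, (b k - c l + a2) := by
        rw [hf, Polynomial.eval_prod]
        exact Finset.prod_congr rfl fun k _ => by
          simp only [Polynomial.eval_sub, Polynomial.eval_C, Polynomial.eval_X]; ring
      have hsign : ∏ k ∈ (Finset.Icc j i).erase l, (c k - c l)
          = (-1 : ℂ) ^ n1 * ∏ k ∈ (Finset.Icc j i).erase l, (c l - c k) := by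
        rw [hn1, ← Finset.card_erase_of_mem hl,
          show (∏ k ∈ (Finset.Icc j i).erase l, (c k - c l))
            = ∏ k ∈ (Finset.Icc j i).erase l, (-1 : ℂ) * (c l - c k) from
            Finset.prod_congr rfl fun k _ => by ring,
          Finset.prod_mul_distrib, Finset.prod_const]
      rw [hev, hsign, Finset.prod_inv_distrib]
      have hPj : (∏ k ∈ Finset.univ.filter (· < j), (b k - c l + a2)) ≠ 0 :=
        Finset.prod_ne_zero_iff.mpr fun k _ => h k l
      have hXj : b j - c l + a2 ≠ 0 := h j l
      have hQj : (∏ k ∈ Finset.univ.filter (· < j), (c k - c l)) ≠ 0 :=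
        Finset.prod_ne_zero_iff.mpr fun k hk => sub_ne_zero.mpr fun e =>
          absurd ((hc e) ▸ (Finset.mem_filter.mp hk).2) (not_lt.mpr hjl)
      have hD : (∏ k ∈ (Finset.Icc j i).erase l, (c l - c k)) ≠ 0 :=
        Finset.prod_ne_zero_iff.mpr fun k hk => sub_ne_zero.mpr fun e =>
          (Finset.mem_erase.mp hk).1 (hc e).symm
      have hsgn : ((-1 : ℂ) ^ n1) ≠ 0 := pow_ne_zero _ (by norm_num)
      field_simp
    rw [Finset.sum_congr rfl hterm, ← Finset.mul_sum, hkey, mul_zero]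


/-- Explicit inverse of the lower-triangular matrix `W` of eigenvectors `w_j`
(written as columns) of the residue operator `C`: the entry in row `i`,
column `j` of `W` is `w_j^i`, nonzero for `j ≤ i`. -/
theorem W_inverse (m : ℕ) (a2 : ℂ) (b c : Fin m → ℂ)
    (hc : Function.Injective c) (h : ∀ k i : Fin m, b k - c i + a2 ≠ 0) :
    letI W : Matrix (Fin m) (Fin m) ℂ := Matrix.of fun i j =>
      if j ≤ i then
        (b i - c i + a2) * (∏ k ∈ Finset.univ.filter (· < i), (b k - c j + a2)) /
          ∏ k ∈ Finset.univ.filter (fun k => k ≤ i ∧ k ≠ j), (c k - c j)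
      else 0
    letI Winv : Matrix (Fin m) (Fin m) ℂ := Matrix.of fun i j =>
      if j ≤ i then
        (1 / (b j - c i + a2)) *
          ∏ k ∈ Finset.univ.filter (· < j), ((c k - c i) / (b k - c i + a2))
      else 0
    W * Winv = 1 ∧ Winv * W = 1 := by
  exact ⟨W_mul_Winv m a2 b c hc h, mul_eq_one_comm.mp (W_mul_Winv m a2 b c hc h)⟩
end

section
/- Let $a_2, b_1,\dots,b_m, c_1,\dots,c_m$ be generic complex numbers (all relevant exponential differences nonzero). Define $m\times m$ matrices: $M_0$ upper-triangular with $(M_0)_{ii} = e^{2\pi i b_i}$ and $(M_0)_{ij} = e^{2\pi i((j-i-1)a_2 + b_j + \sum_{k=i+1}^{j-1}(b_k-c_k))}(e^{2\pi i(b_i-c_i+a_2)}-1)$ for $i<j$; $M_1 = e^{2\pi i a_2} Id + N$ where $N_{ij} = e^{-2\pi i((i-1)a_2+\sum_{k=1}^i(b_k-c_k))}(1 - e^{2\pi i(b_i-c_i+a_2)})$; $M_\infty$ lower-triangular with $(M_\infty)_{ii} = e^{-2\pi i c_i}$ and $(M_\infty)_{ij} = e^{-2\pi i(b_i+a_2)}(e^{2\pi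 i(b_i-c_i+a_2)}-1)$ for $i>j$. Then $M_\infty M_1 M_0 = Id$. -/
open Finset Complex

namespace HGMaux

noncomputable def E (z : ℂ) : ℂ := Complex.exp (2 * Real.pi * Complex.I * z)

lemma E_mul (x y : ℂ) : E x * E y = E (x + y) := by
  rw [E, E, E, ← Complex.exp_add, mul_add]

lemma E_zero : E 0 = 1 := by simp [E]

variable (m : ℕ) (a2 : ℂ) (b c : Fin m → ℂ)

noncomputable def B (n : ℕ) : ℂ := if h : n < m then b ⟨n, h⟩ else 0
noncomputable def Cc (n : ℕ) : ℂ := if h : n < m then c ⟨n, h⟩ else 0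
noncomputable def S (n : ℕ) : ℂ := ∑ k ∈ Finset.range n, (B m b k - Cc m c k)

lemma B_coe (i : Fin m) : B m b i.val = b i := by simp [B]
lemma Cc_coe (i : Fin m) : Cc m c i.val = c i := by simp [Cc]

lemma S_succ (n : ℕ) : S m b c (n + 1) = S m b c n + (B m b n - Cc m c n) :=
  Finset.sum_range_succ _ _

lemma sum_Ioo (i j : Fin m) (h : i < j) :
    ∑ k ∈ Finset.univ.filter (fun k => i < k ∧ k < j), (b k - c k)
      = S m b c j.val - S m b c (i.val + 1) := by
  have hfilter : Finset.univ.filter (fun k => i < k ∧ k < j) = Finset.Ioo i j := by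
    ext k; simp [Finset.mem_Ioo]
  have hmap : ∑ k ∈ Finset.Ioo i j, (b k - c k)
      = ∑ n ∈ Finset.Ioo i.val j.val, (B m b n - Cc m c n) := by
    rw [← Fin.map_valEmbedding_Ioo, Finset.sum_map]
    refine Finset.sum_congr rfl fun k _ => ?_
    simp [Fin.valEmbedding, B_coe, Cc_coe]
  rw [hfilter, hmap, ← Finset.Ico_add_one_left_eq_Ioo, Finset.sum_Ico_eq_sub _ (show i.val + 1 ≤ j.val from h)]
  rfl

lemma sum_Iic (p : Fin m) :
    ∑ k ∈ Finset.univ.filter (· ≤ p), (b k - c k) = S m b c (p.val + 1) := by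
  have hfilter : Finset.univ.filter (· ≤ p) = Finset.Iic p := by
    ext k; simp
  have hmap : ∑ k ∈ Finset.Iic p, (b k - c k)
      = ∑ n ∈ Finset.Iic p.val, (B m b n - Cc m c n) := by
    rw [← Fin.map_valEmbedding_Iic, Finset.sum_map]
    refine Finset.sum_congr rfl fun k _ => ?_
    simp [Fin.valEmbedding, B_coe, Cc_coe]
  rw [hfilter, hmap,
    show Finset.Iic p.val = Finset.range (p.val + 1) from by ext k; simp [Nat.lt_succ_iff]]
  rfl

/-- `δ_n = e(b_n - c_n + a2)`. -/
noncomputable def dd (n : ℕ) : ℂ := E (B m b n - Cc m c n + a2)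

/-- Partial column "potential" for the telescoping of `M0`'s columns. -/
noncomputable def F (j n : ℕ) : ℂ :=
  E (((j : ℂ) - (n : ℂ)) * a2 + B m b j + (S m b c j - S m b c n))

lemma F_step (j n : ℕ) : F m a2 b c j (n + 1) * dd m a2 b c n = F m a2 b c j n := by
  rw [F, F, dd, E_mul]
  congr 1
  rw [S_succ]
  push_cast
  ring

lemma F_diag (j : Fin m) : F m a2 b c j.val j.val = E (b j) := by
  rw [F, B_coe]
  congr 1
  ring

/-- The matrices from the theorem statement. -/
noncomputable def M0 : Matrix (Fin m) (Fin m) ℂ := Matrix.of fun i j =>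
  if i = j then E (b i)
  else if i < j then
    E (((j.val : ℂ) - (i.val : ℂ) - 1) * a2 + b j +
        ∑ k ∈ Finset.univ.filter (fun k => i < k ∧ k < j), (b k - c k)) *
      (E (b i - c i + a2) - 1)
  else 0

noncomputable def M1 : Matrix (Fin m) (Fin m) ℂ :=
  E a2 • (1 : Matrix (Fin m) (Fin m) ℂ) + Matrix.of fun i _ =>
    E (-((i.val : ℂ) * a2 + ∑ k ∈ Finset.univ.filter (· ≤ i), (b k - c k))) *
      (1 - E (b i - c i + a2))

noncomputable def Minf : Matrix (Fin m) (Fin m) ℂ := Matrix.of fun i j =>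
  if i = j then E (-(c i))
  else if j < i then E (-(b i + a2)) * (E (b i - c i + a2) - 1)
  else 0

lemma dd_coe (i : Fin m) : dd m a2 b c i.val = E (b i - c i + a2) := by
  rw [dd, B_coe, Cc_coe]

lemma M0_apply_lt {i j : Fin m} (h : i < j) :
    M0 m a2 b c i j = F m a2 b c j.val (i.val + 1) * (dd m a2 b c i.val - 1) := by
  have hne : i ≠ j := ne_of_lt h
  rw [M0]
  simp only [Matrix.of_apply, if_neg hne, if_pos h]
  rw [sum_Ioo m b c i j h, dd_coe, F, B_coe]
  congr 2
  push_cast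
  ring

lemma M0_apply_diag (i : Fin m) : M0 m a2 b c i i = E (b i) := by
  simp [M0]

lemma M0_apply_gt {i j : Fin m} (h : j < i) : M0 m a2 b c i j = 0 := by
  have hne : i ≠ j := (ne_of_lt h).symm
  rw [M0]
  simp only [Matrix.of_apply, if_neg hne, if_neg (not_lt_of_gt h)]

/-- Telescoping partial column sums of `M0`. -/
lemma key0 (j : Fin m) (n : ℕ) :
    ∑ q ∈ Finset.univ.filter (fun q : Fin m => q.val < n), M0 m a2 b c q j
      = if n ≤ j.val then F m a2 b c j.val 0 - F m a2 b c j.val n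
        else F m a2 b c j.val 0 := by
  induction n with
  | zero =>
    rw [if_pos (Nat.zero_le _)]
    simp
  | succ n ih =>
    by_cases hm : n < m
    · have hins : Finset.univ.filter (fun q : Fin m => q.val < n + 1)
          = insert (⟨n, hm⟩ : Fin m) (Finset.univ.filter (fun q : Fin m => q.val < n)) := by
        ext q
        simp only [Finset.mem_filter, Finset.mem_univ, true_and, Finset.mem_insert, Fin.ext_iff]
        omega
      rw [hins, Finset.sum_insert (by simp), ih]
      rcases lt_trichotomy n j.val with h | h | h
      · rw [M0_apply_lt m a2 b c (show (⟨n, hm⟩ : Fin m) < j from h),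
          if_pos (show n ≤ j.val by omega), if_pos (show n + 1 ≤ j.val by omega)]
        simp only [Fin.val_mk]
        have hF := F_step m a2 b c j.val n
        linear_combination hF
      · subst h
        rw [show (⟨j.val, hm⟩ : Fin m) = j from Fin.ext rfl, M0_apply_diag,
          if_pos (le_refl _), if_neg (by omega)]
        linear_combination -F_diag m a2 b c j
      · rw [M0_apply_gt m a2 b c (show j < (⟨n, hm⟩ : Fin m) from h),
          if_neg (by omega), if_neg (by omega)]
        ring
    · have heq : Finset.univ.filter (fun q : Fin m => q.val < n + 1)
          = Finset.univ.filter (fun q : Fin m => q.val < n) := by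
        ext q
        have := q.isLt
        simp only [Finset.mem_filter, Finset.mem_univ, true_and]
        omega
      have hj := j.isLt
      rw [heq, ih, if_neg (by omega), if_neg (by omega)]

lemma Csum (j : Fin m) : ∑ q, M0 m a2 b c q j = F m a2 b c j.val 0 := by
  have h := key0 m a2 b c j m
  rw [Finset.filter_true_of_mem (fun q _ => q.isLt), if_neg (by omega)] at h
  exact h


noncomputable def u (p : Fin m) : ℂ :=
  E (-((p.val : ℂ) * a2 + S m b c (p.val + 1))) * (1 - dd m a2 b c p.val)

noncomputable def w (n : ℕ) : ℂ := E (a2 - (n : ℂ) * a2 - S m b c n)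

lemma w_zero : w m a2 b c 0 = E a2 := by
  rw [w, S]
  norm_num

lemma u_eq (p : Fin m) : u m a2 b c p = w m a2 b c (p.val + 1) - w m a2 b c p.val := by
  have h1 : E (-((p.val : ℂ) * a2 + S m b c (p.val + 1))) * dd m a2 b c p.val
      = w m a2 b c p.val := by
    rw [dd, E_mul, w]
    congr 1
    rw [S_succ]
    ring
  have h2 : E (-((p.val : ℂ) * a2 + S m b c (p.val + 1))) = w m a2 b c (p.val + 1) := by
    rw [w]
    congr 1
    push_cast
    ring
  rw [u]
  linear_combination h2 - h1 + dd m a2 b c p.val * h2 - dd m a2 b c p.val * h2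

lemma keyU (n : ℕ) (hn : n ≤ m) :
    ∑ p ∈ Finset.univ.filter (fun p : Fin m => p.val < n), u m a2 b c p
      = w m a2 b c n - w m a2 b c 0 := by
  induction n with
  | zero => simp
  | succ n ih =>
    have hm : n < m := hn
    have hins : Finset.univ.filter (fun p : Fin m => p.val < n + 1)
        = insert (⟨n, hm⟩ : Fin m) (Finset.univ.filter (fun p : Fin m => p.val < n)) := by
      ext q
      simp only [Finset.mem_filter, Finset.mem_univ, true_and, Finset.mem_insert, Fin.ext_iff]
      omega
    rw [hins, Finset.sum_insert (by simp), ih (le_of_lt hn), u_eq]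
    simp only [Fin.val_mk]
    ring

lemma M1_apply (p q : Fin m) :
    M1 m a2 b c p q = E a2 * (if p = q then 1 else 0) + u m a2 b c p := by
  rw [M1]
  simp only [Matrix.add_apply, Matrix.smul_apply, Matrix.one_apply, Matrix.of_apply,
    smul_eq_mul, u, sum_Iic, dd_coe]

lemma Minf_apply_diag (i : Fin m) : Minf m a2 b c i i = E (-(c i)) := by simp [Minf]

/-- Dot product of a row of `Minf` with a vector. -/
lemma minf_dot (i : Fin m) (g : Fin m → ℂ) :
    ∑ p, Minf m a2 b c i p * g p
      = E (-(c i)) * g i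
        + E (-(b i + a2)) * (dd m a2 b c i.val - 1)
          * ∑ p ∈ Finset.univ.filter (fun p : Fin m => p.val < i.val), g p := by
  classical
  rw [← Finset.sum_filter_add_sum_filter_not Finset.univ (fun p : Fin m => p.val < i.val)]
  have h1 : ∑ p ∈ Finset.univ.filter (fun p : Fin m => p.val < i.val),
      Minf m a2 b c i p * g p
      = E (-(b i + a2)) * (dd m a2 b c i.val - 1)
        * ∑ p ∈ Finset.univ.filter (fun p : Fin m => p.val < i.val), g p := by
    rw [Finset.mul_sum]
    refine Finset.sum_congr rfl fun p hp => ?_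
    simp only [Finset.mem_filter, Finset.mem_univ, true_and] at hp
    have hlt : p < i := hp
    have hne : i ≠ p := (ne_of_lt hlt).symm
    rw [Minf]
    simp only [Matrix.of_apply, if_neg hne, if_pos hlt, dd_coe]
  have h2 : ∑ p ∈ Finset.univ.filter (fun p : Fin m => ¬ p.val < i.val),
      Minf m a2 b c i p * g p = E (-(c i)) * g i := by
    rw [Finset.sum_eq_single_of_mem i (by simp)]
    · rw [Minf_apply_diag]
    · intro p hp hne
      simp only [Finset.mem_filter, Finset.mem_univ, true_and, not_lt] at hp
      have hlt : i < p := lt_of_le_of_ne (by exact hp) (by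
        simpa [Fin.ext_iff, eq_comm] using fun h => hne (Fin.ext h.symm))
      have hne' : i ≠ p := ne_of_lt hlt
      rw [Minf]
      simp only [Matrix.of_apply, if_neg hne', if_neg (not_lt_of_gt hlt), zero_mul]
  rw [h1, h2]
  ring

lemma Rsum (i : Fin m) :
    ∑ p, Minf m a2 b c i p * u m a2 b c p
      = E a2 * (E (-(b i + a2)) - E (-(c i))) := by
  rw [minf_dot, keyU m a2 b c i.val (le_of_lt i.isLt), u_eq, w_zero]
  have h1 : E (-(c i)) * w m a2 b c (i.val + 1)
      = E (-(b i + a2)) * w m a2 b c i.val := by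
    rw [w, w, E_mul, E_mul]
    congr 1
    rw [S_succ, B_coe, Cc_coe]
    push_cast
    ring
  have h2 : E (-(b i + a2)) * dd m a2 b c i.val = E (-(c i)) := by
    rw [dd_coe, E_mul]
    congr 1
    ring
  linear_combination h1 + (w m a2 b c i.val - E a2) * h2


lemma h2' (i : Fin m) : E (-(b i + a2)) * dd m a2 b c i.val = E (-(c i)) := by
  rw [dd_coe, E_mul]
  congr 1
  ring

theorem main : Minf m a2 b c * M1 m a2 b c * M0 m a2 b c = 1 := by
  ext i j
  rw [Matrix.mul_apply]
  have inner : ∀ q, (Minf m a2 b c * M1 m a2 b c) i q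
      = E a2 * Minf m a2 b c i q + E a2 * (E (-(b i + a2)) - E (-(c i))) := by
    intro q
    rw [Matrix.mul_apply]
    calc ∑ p, Minf m a2 b c i p * M1 m a2 b c p q
        = ∑ p, (E a2 * (Minf m a2 b c i p * (if p = q then 1 else 0))
            + Minf m a2 b c i p * u m a2 b c p) := by
          refine Finset.sum_congr rfl fun p _ => ?_
          rw [M1_apply]
          ring
      _ = E a2 * Minf m a2 b c i q + ∑ p, Minf m a2 b c i p * u m a2 b c p := by
          rw [Finset.sum_add_distrib, ← Finset.mul_sum]
          congr 2
          simp [Finset.sum_ite_eq', mul_ite]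
      _ = _ := by rw [Rsum]
  have expand : ∑ q, (Minf m a2 b c * M1 m a2 b c) i q * M0 m a2 b c q j
      = E a2 * (∑ q, Minf m a2 b c i q * M0 m a2 b c q j)
        + (E a2 * (E (-(b i + a2)) - E (-(c i)))) * (∑ q, M0 m a2 b c q j) := by
    rw [Finset.mul_sum, Finset.mul_sum, ← Finset.sum_add_distrib]
    refine Finset.sum_congr rfl fun q _ => ?_
    rw [inner q]
    ring
  have hdot : ∑ q, Minf m a2 b c i q * M0 m a2 b c q j
      = E (-(c i)) * M0 m a2 b c i j
        + E (-(b i + a2)) * (dd m a2 b c i.val - 1)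
          * ∑ p ∈ Finset.univ.filter (fun p : Fin m => p.val < i.val), M0 m a2 b c p j :=
    minf_dot m a2 b c i (fun q => M0 m a2 b c q j)
  rw [expand, hdot, Csum, key0]
  rcases lt_trichotomy i j with hlt | heq | hgt
  · rw [Matrix.one_apply_ne (ne_of_lt hlt), M0_apply_lt m a2 b c hlt,
      if_pos (show i.val ≤ j.val from le_of_lt hlt)]
    have hG : E (-(c i)) * F m a2 b c j.val (i.val + 1)
        = E (-(b i + a2)) * F m a2 b c j.val i.val := by
      rw [F, F, E_mul, E_mul]
      congr 1
      rw [S_succ, B_coe m b i, Cc_coe m c i]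
      push_cast
      ring
    linear_combination (E a2 * dd m a2 b c i.val - E a2) * hG
      + E a2 * F m a2 b c j.val 0 * h2' m a2 b c i
  · subst heq
    rw [Matrix.one_apply_eq, M0_apply_diag, if_pos (le_refl _)]
    have h5 : E a2 * (E (-(b i + a2)) * E (b i)) = 1 := by
      rw [E_mul, E_mul, show a2 + (-(b i + a2) + b i) = 0 by ring, E_zero]
    linear_combination (E a2 * F m a2 b c i.val 0 - E a2 * F m a2 b c i.val i.val) * h2' m a2 b c i
      + (E a2 * E (-(b i + a2)) - E a2 * E (-(c i))) * F_diag m a2 b c i + h5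
  · rw [Matrix.one_apply_ne (ne_of_gt hgt), M0_apply_gt m a2 b c hgt,
      if_neg (show ¬ i.val ≤ j.val by exact not_le_of_gt hgt)]
    linear_combination E a2 * F m a2 b c j.val 0 * h2' m a2 b c i

end HGMaux

/-- The explicit monodromy matrices of the generalized hypergeometric equation
satisfy `M∞ M₁ M₀ = Id`. -/
theorem monodromy_product_eq_one (m : ℕ) (a2 : ℂ) (b c : Fin m → ℂ) :
    letI e : ℂ → ℂ := fun z => Complex.exp (2 * Real.pi * Complex.I * z)
    letI M0 : Matrix (Fin m) (Fin m) ℂ := Matrix.of fun i j =>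
      if i = j then e (b i)
      else if i < j then
        e (((j.val : ℂ) - (i.val : ℂ) - 1) * a2 + b j +
            ∑ k ∈ Finset.univ.filter (fun k => i < k ∧ k < j), (b k - c k)) *
          (e (b i - c i + a2) - 1)
      else 0
    letI M1 : Matrix (Fin m) (Fin m) ℂ :=
      e a2 • (1 : Matrix (Fin m) (Fin m) ℂ) + Matrix.of fun i _ =>
        e (-((i.val : ℂ) * a2 + ∑ k ∈ Finset.univ.filter (· ≤ i), (b k - c k))) *
          (1 - e (b i - c i + a2))
    letI Minf : Matrix (Fin m) (Fin m) ℂ := Matrix.of fun i j =>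
      if i = j then e (-(c i))
      else if j < i then e (-(b i + a2)) * (e (b i - c i + a2) - 1)
      else 0
    Minf * M1 * M0 = 1 := by
  exact HGMaux.main m a2 b c
end

section
/- With $M_0$ as in the previous statement (upper triangular, $(M_0)_{ii}=e^{2\pi\sqrt{-1}\,b_i}$, $(M_0)_{ij} = e^{2\pi\sqrt{-1}((j-i-1)a_2 + b_j + \sum_{k=i+1}^{j-1}(b_k-c_k))}(e^{2\pi\sqrt{-1}(b_i-c_i+a_2)}-1)$ for $i<j$), its inverse is the upper triangular matrix with $(M_0^{-1})_{ii} = e^{-2\pi\sqrt{-1}\,b_i}$ and $(M_0^{-1})_{ij} = e^{2\pi\sqrt{-1}(a_2-c_i)}(e^{2\pi\sqrt{-1}(c_i-b_i-a_2)}-1)$ for $i<j$. -/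
open Finset Complex

noncomputable def Ee (z : ℂ) : ℂ := Complex.exp (2 * Real.pi * Complex.I * z)

lemma Ee_add (x y : ℂ) : Ee (x + y) = Ee x * Ee y := by
  simp only [Ee, ← Complex.exp_add]; ring_nf

lemma Ee_zero : Ee 0 = 1 := by simp [Ee]

lemma Ee_mul_helper (x y z : ℂ) : Ee x * (Ee y * (Ee z - 1)) = Ee (x + y + z) - Ee (x + y) := by
  rw [Ee_add, Ee_add]; ring

lemma tele (f : ℕ → ℂ) (a b : ℕ) (h : a ≤ b) :
    ∑ k ∈ Finset.Ico a b, (f k - f (k + 1)) = f a - f b := by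
  induction b, h using Nat.le_induction with
  | base => simp
  | succ n hn ih => rw [Finset.sum_Ico_succ_top hn, ih]; ring

noncomputable def extf (m : ℕ) (f : Fin m → ℂ) : ℕ → ℂ := fun n => if h : n < m then f ⟨n, h⟩ else 0

@[simp] lemma extf_val {m : ℕ} (f : Fin m → ℂ) (k : Fin m) : extf m f k.1 = f k := by
  simp [extf]

lemma extf_sub {m : ℕ} (f g : Fin m → ℂ) :
    extf m (fun l => f l - g l) = fun n => extf m f n - extf m g n := by
  funext n; unfold extf; split_ifs <;> simp

lemma filter_to_Ico {m : ℕ} (i j : Fin m) (f : Fin m → ℂ) :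
    ∑ k ∈ Finset.univ.filter (fun k => i < k ∧ k < j), f k
      = ∑ n ∈ Finset.Ico (i.1 + 1) j.1, extf m f n := by
  have h1 : Finset.univ.filter (fun k => i < k ∧ k < j) = Finset.Ioo i j := by
    ext k; simp [Finset.mem_Ioo]
  rw [h1, show Finset.Ico (i.1 + 1) j.1 = Finset.Ioo i.1 j.1 from Finset.Ico_add_one_left_eq_Ioo _ _,
    ← Fin.map_valEmbedding_Ioo i j, Finset.sum_map]
  exact Finset.sum_congr rfl fun k _ => (extf_val f k).symm

lemma key1 (a2 : ℂ) (b' c' : ℕ → ℂ) (I J : ℕ) (hIJ : I < J) :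
    ∑ n ∈ Finset.Ico I (J + 1),
      (if I = n then Ee (b' n)
       else Ee (((n : ℂ) - (I : ℂ) - 1) * a2 + b' n + ∑ l ∈ Finset.Ico (I + 1) n, (b' l - c' l)) *
         (Ee (b' I - c' I + a2) - 1)) *
      (if n = J then Ee (-(b' n)) else Ee (a2 - c' n) * (Ee (c' n - b' n - a2) - 1)) = 0 := by
  set A : ℂ := Ee (b' I - c' I + a2) - 1 with hA
  set g : ℕ → ℂ := fun n => Ee (((n : ℂ) - (I : ℂ) - 1) * a2 + ∑ l ∈ Finset.Ico (I + 1) n, (b' l - c' l)) with hg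
  rw [Finset.sum_eq_sum_Ico_succ_bot (by omega : I < J + 1)]
  have hmid : ∑ n ∈ Finset.Ico (I + 1) (J + 1),
      (if I = n then Ee (b' n)
       else Ee (((n : ℂ) - (I : ℂ) - 1) * a2 + b' n + ∑ l ∈ Finset.Ico (I + 1) n, (b' l - c' l)) * A) *
      (if n = J then Ee (-(b' n)) else Ee (a2 - c' n) * (Ee (c' n - b' n - a2) - 1))
      = (∑ n ∈ Finset.Ico (I + 1) J, A * (g n - g (n + 1))) + A * g J := by
    rw [Finset.sum_Ico_succ_top (by omega : I + 1 ≤ J)]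
    congr 1
    · refine Finset.sum_congr rfl fun n hn => ?_
      rw [Finset.mem_Ico] at hn
      rw [if_neg (by omega), if_neg (by omega)]
      have hT : ∑ l ∈ Finset.Ico (I + 1) (n + 1), (b' l - c' l)
          = (∑ l ∈ Finset.Ico (I + 1) n, (b' l - c' l)) + (b' n - c' n) :=
        Finset.sum_Ico_succ_top hn.1 _
      simp only [hg]
      rw [hT]
      rw [mul_comm _ A, mul_assoc, Ee_mul_helper]
      congr 2 <;> exact congrArg Ee (by push_cast; ring)
    · rw [if_neg (by omega), if_pos rfl]
      simp only [hg]
      rw [mul_comm _ A, mul_assoc, ← Ee_add]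
      exact congrArg (A * Ee ·) (by ring)
  rw [hmid, ← Finset.mul_sum, tele g (I + 1) J (by omega)]
  have hg1 : g (I + 1) = 1 := by
    simp only [hg, Finset.Ico_self, Finset.sum_empty]
    rw [congrArg Ee (show ((↑(I + 1) : ℂ) - (I : ℂ) - 1) * a2 + 0 = 0 by push_cast; ring), Ee_zero]
  rw [if_pos rfl, if_neg (by omega : ¬ I = J), hg1, Ee_mul_helper,
    congrArg Ee (show b' I + (a2 - c' I) + (c' I - b' I - a2) = (0:ℂ) by ring),
    congrArg Ee (show b' I + (a2 - c' I) = b' I - c' I + a2 by ring), Ee_zero, hA]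
  ring

lemma key2 (a2 : ℂ) (b' c' : ℕ → ℂ) (I J : ℕ) (hIJ : I < J) :
    ∑ n ∈ Finset.Ico I (J + 1),
      (if I = n then Ee (-(b' I)) else Ee (a2 - c' I) * (Ee (c' I - b' I - a2) - 1)) *
      (if n = J then Ee (b' J)
       else Ee (((J : ℂ) - (n : ℂ) - 1) * a2 + b' J + ∑ l ∈ Finset.Ico (n + 1) J, (b' l - c' l)) *
         (Ee (b' n - c' n + a2) - 1)) = 0 := by
  set B : ℂ := Ee (a2 - c' I) * (Ee (c' I - b' I - a2) - 1) with hB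
  set h : ℕ → ℂ := fun t => Ee (((J : ℂ) - (t : ℂ) - 1) * a2 + b' J + ∑ l ∈ Finset.Ico (t + 1) J, (b' l - c' l)) with hh
  have hBalt : B = Ee (-(b' I)) - Ee (a2 - c' I) := by
    rw [hB, mul_sub, mul_one, ← Ee_add]
    exact congrArg (· - Ee (a2 - c' I)) (congrArg Ee (by ring))
  rw [Finset.sum_eq_sum_Ico_succ_bot (by omega : I < J + 1)]
  have hmid : ∑ n ∈ Finset.Ico (I + 1) (J + 1),
      (if I = n then Ee (-(b' I)) else B) *
      (if n = J then Ee (b' J)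
       else Ee (((J : ℂ) - (n : ℂ) - 1) * a2 + b' J + ∑ l ∈ Finset.Ico (n + 1) J, (b' l - c' l)) *
         (Ee (b' n - c' n + a2) - 1))
      = (∑ n ∈ Finset.Ico (I + 1) J, B * (h (n - 1) - h n)) + B * h (J - 1) := by
    rw [Finset.sum_Ico_succ_top (by omega : I + 1 ≤ J)]
    congr 1
    · refine Finset.sum_congr rfl fun n hn => ?_
      rw [Finset.mem_Ico] at hn
      rw [if_neg (by omega), if_neg (by omega)]
      have hT : ∑ l ∈ Finset.Ico n J, (b' l - c' l)
          = (b' n - c' n) + ∑ l ∈ Finset.Ico (n + 1) J, (b' l - c' l) :=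
        Finset.sum_eq_sum_Ico_succ_bot hn.2 _
      have hc : ((n - 1 : ℕ) : ℂ) = (n : ℂ) - 1 := by
        have h1 : 1 ≤ n := by omega
        push_cast [h1]; ring
      refine congrArg (B * ·) ?_
      rw [mul_sub, mul_one, ← Ee_add]
      simp only [hh]
      rw [Nat.sub_add_cancel (by omega : 1 ≤ n)]
      congr 1
      exact congrArg Ee (by rw [hc, hT]; ring)
    · rw [if_neg (by omega), if_pos rfl]
      have : h (J - 1) = Ee (b' J) := by
        simp only [hh]
        rw [Nat.sub_add_cancel (by omega : 1 ≤ J), Finset.Ico_self, Finset.sum_empty]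
        have hc : ((J - 1 : ℕ) : ℂ) = (J : ℂ) - 1 := by
          have : 1 ≤ J := by omega
          push_cast [this]; ring
        rw [congrArg Ee (show ((J : ℂ) - ((J - 1 : ℕ) : ℂ) - 1) * a2 + b' J + 0 = 0 + b' J by rw [hc]; ring),
          Ee_add, Ee_zero, one_mul]
      rw [this]
  rw [hmid]
  have htel : ∑ n ∈ Finset.Ico (I + 1) J, B * (h (n - 1) - h n) = B * (h I - h (J - 1)) := by
    rw [← Finset.mul_sum]
    have := tele (fun k => h (k - 1)) (I + 1) J (by omega)
    simp only [Nat.add_sub_cancel] at this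
    rw [this]
  rw [htel, if_pos rfl, if_neg (by omega : ¬ I = J), Ee_mul_helper]
  have e1 : Ee (-(b' I) + (((J : ℂ) - (I : ℂ) - 1) * a2 + b' J + ∑ l ∈ Finset.Ico (I + 1) J, (b' l - c' l)) + (b' I - c' I + a2))
      = h I * Ee (a2 - c' I) := by
    simp only [hh]; rw [← Ee_add]; exact congrArg Ee (by ring)
  have e2 : Ee (-(b' I) + (((J : ℂ) - (I : ℂ) - 1) * a2 + b' J + ∑ l ∈ Finset.Ico (I + 1) J, (b' l - c' l)))
      = h I * Ee (-(b' I)) := by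
    simp only [hh]; rw [← Ee_add]; exact congrArg Ee (by ring)
  rw [e1, e2, hBalt]
  ring

lemma entry1 (m : ℕ) (a2 : ℂ) (b c : Fin m → ℂ) (i j : Fin m) :
    ∑ k : Fin m,
      ((if i = k then Ee (b i)
        else if i < k then
          Ee (((k.val : ℂ) - (i.val : ℂ) - 1) * a2 + b k +
              ∑ l ∈ Finset.univ.filter (fun l => i < l ∧ l < k), (b l - c l)) *
            (Ee (b i - c i + a2) - 1)
        else 0) *
       (if k = j then Ee (-(b k))
        else if k < j then Ee (a2 - c k) * (Ee (c k - b k - a2) - 1)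
        else 0))
      = if i = j then 1 else 0 := by
  rcases lt_trichotomy i j with hij | rfl | hij
  · -- i < j
    rw [if_neg hij.ne]
    set P : ℕ → ℂ := fun n =>
      if i.1 = n then Ee (extf m b n)
      else if i.1 < n then
        Ee (((n : ℂ) - (i.1 : ℂ) - 1) * a2 + extf m b n +
            ∑ l ∈ Finset.Ico (i.1 + 1) n, (extf m b l - extf m c l)) *
          (Ee (extf m b i.1 - extf m c i.1 + a2) - 1)
      else 0 with hP
    set Q : ℕ → ℂ := fun n =>
      if n = j.1 then Ee (-(extf m b n))
      else if n < j.1 then Ee (a2 - extf m c n) * (Ee (extf m c n - extf m b n - a2) - 1)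
      else 0 with hQ
    have hterm : ∀ k : Fin m,
        ((if i = k then Ee (b i)
          else if i < k then
            Ee (((k.val : ℂ) - (i.val : ℂ) - 1) * a2 + b k +
                ∑ l ∈ Finset.univ.filter (fun l => i < l ∧ l < k), (b l - c l)) *
              (Ee (b i - c i + a2) - 1)
          else 0) *
         (if k = j then Ee (-(b k))
          else if k < j then Ee (a2 - c k) * (Ee (c k - b k - a2) - 1)
          else 0)) = P k.1 * Q k.1 := by
      intro k
      have e1 : (if i = k then Ee (b i)
          else if i < k then
            Ee (((k.val : ℂ) - (i.val : ℂ) - 1) * a2 + b k +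
                ∑ l ∈ Finset.univ.filter (fun l => i < l ∧ l < k), (b l - c l)) *
              (Ee (b i - c i + a2) - 1)
          else 0) = P k.1 := by
        simp only [hP]
        by_cases hik : i = k
        · subst hik; simp
        · rw [if_neg hik, if_neg (fun h => hik (Fin.ext h))]
          by_cases hlt : i < k
          · rw [if_pos hlt, if_pos (Fin.lt_def.mp hlt), filter_to_Ico i k, extf_sub]
            simp only [extf_val]
          · rw [if_neg hlt, if_neg (fun h => hlt (Fin.lt_def.mpr h))]
      have e2 : (if k = j then Ee (-(b k))
          else if k < j then Ee (a2 - c k) * (Ee (c k - b k - a2) - 1)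
          else 0) = Q k.1 := by
        simp only [hQ]
        by_cases hkj : k = j
        · subst hkj; simp
        · rw [if_neg hkj, if_neg (fun h => hkj (Fin.ext h))]
          by_cases hlt : k < j
          · rw [if_pos hlt, if_pos (Fin.lt_def.mp hlt)]
            simp only [extf_val]
          · rw [if_neg hlt, if_neg (fun h => hlt (Fin.lt_def.mpr h))]
      rw [e1, e2]
    have hstep : ∑ k : Fin m, P k.1 * Q k.1 = ∑ n ∈ Finset.range m, P n * Q n :=
      Fin.sum_univ_eq_sum_range (fun n => P n * Q n) m
    rw [Finset.sum_congr rfl fun k _ => hterm k, hstep]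
    have hsub : Finset.Ico i.1 (j.1 + 1) ⊆ Finset.range m := by
      intro n hn
      rw [Finset.mem_Ico] at hn
      rw [Finset.mem_range]
      have := j.2
      omega
    have hzero : ∀ n ∈ Finset.range m, n ∉ Finset.Ico i.1 (j.1 + 1) → P n * Q n = 0 := by
      intro n _ hn
      rw [Finset.mem_Ico] at hn
      push_neg at hn
      rcases lt_or_ge n i.1 with h | h
      · rw [hP]
        simp only
        rw [if_neg (by omega), if_neg (by omega), zero_mul]
      · have hj : j.1 < n := by omega
        rw [hQ]
        simp only
        rw [if_neg (by omega), if_neg (by omega), mul_zero]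
    rw [← Finset.sum_subset hsub hzero]
    have hcongr : ∀ n ∈ Finset.Ico i.1 (j.1 + 1), P n * Q n =
        (if i.1 = n then Ee (extf m b n)
         else Ee (((n : ℂ) - (i.1 : ℂ) - 1) * a2 + extf m b n +
              ∑ l ∈ Finset.Ico (i.1 + 1) n, (extf m b l - extf m c l)) *
            (Ee (extf m b i.1 - extf m c i.1 + a2) - 1)) *
        (if n = j.1 then Ee (-(extf m b n))
         else Ee (a2 - extf m c n) * (Ee (extf m c n - extf m b n - a2) - 1)) := by
      intro n hn
      rw [Finset.mem_Ico] at hn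
      congr 1
      · rw [hP]
        simp only
        by_cases h : i.1 = n
        · rw [if_pos h, if_pos h]
        · rw [if_neg h, if_neg h, if_pos (by omega)]
      · rw [hQ]
        simp only
        by_cases h : n = j.1
        · rw [if_pos h, if_pos h]
        · rw [if_neg h, if_neg h, if_pos (by omega)]
    rw [Finset.sum_congr rfl hcongr]
    exact key1 a2 (extf m b) (extf m c) i.1 j.1 (Fin.lt_def.mp hij)
  · -- i = j
    rw [if_pos rfl]
    rw [Finset.sum_eq_single i]
    · rw [if_pos rfl, if_pos rfl, ← Ee_add,
        congrArg Ee (show b i + -(b i) = (0 : ℂ) by ring), Ee_zero]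
    · intro k _ hk
      rcases lt_or_gt_of_ne (fun h : i = k => hk h.symm) with h | h
      · rw [if_neg (ne_of_gt h : k ≠ i), if_neg (asymm h : ¬ k < i), mul_zero]
      · rw [if_neg (ne_of_gt h : i ≠ k), if_neg (asymm h : ¬ i < k), zero_mul]
    · intro h
      exact absurd (Finset.mem_univ i) h
  · -- j < i
    rw [if_neg (ne_of_gt hij)]
    refine Finset.sum_eq_zero fun k _ => ?_
    rcases lt_or_ge k i with h | h
    · rw [if_neg (ne_of_gt h : i ≠ k), if_neg (asymm h : ¬ i < k), zero_mul]
    · have h2 : j < k := lt_of_lt_of_le hij h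
      rw [if_neg (ne_of_gt h2 : k ≠ j), if_neg (asymm h2 : ¬ k < j), mul_zero]

lemma entry2 (m : ℕ) (a2 : ℂ) (b c : Fin m → ℂ) (i j : Fin m) :
    ∑ k : Fin m,
      ((if i = k then Ee (-(b i))
        else if i < k then Ee (a2 - c i) * (Ee (c i - b i - a2) - 1)
        else 0) *
       (if k = j then Ee (b k)
        else if k < j then
          Ee (((j.val : ℂ) - (k.val : ℂ) - 1) * a2 + b j +
              ∑ l ∈ Finset.univ.filter (fun l => k < l ∧ l < j), (b l - c l)) *
            (Ee (b k - c k + a2) - 1)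
        else 0))
      = if i = j then 1 else 0 := by
  rcases lt_trichotomy i j with hij | rfl | hij
  · -- i < j
    rw [if_neg hij.ne]
    set P : ℕ → ℂ := fun n =>
      if i.1 = n then Ee (-(extf m b i.1))
      else if i.1 < n then Ee (a2 - extf m c i.1) * (Ee (extf m c i.1 - extf m b i.1 - a2) - 1)
      else 0 with hP
    set Q : ℕ → ℂ := fun n =>
      if n = j.1 then Ee (extf m b n)
      else if n < j.1 then
        Ee (((j.1 : ℂ) - (n : ℂ) - 1) * a2 + extf m b j.1 +
            ∑ l ∈ Finset.Ico (n + 1) j.1, (extf m b l - extf m c l)) *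
          (Ee (extf m b n - extf m c n + a2) - 1)
      else 0 with hQ
    have hterm : ∀ k : Fin m,
        ((if i = k then Ee (-(b i))
          else if i < k then Ee (a2 - c i) * (Ee (c i - b i - a2) - 1)
          else 0) *
         (if k = j then Ee (b k)
          else if k < j then
            Ee (((j.val : ℂ) - (k.val : ℂ) - 1) * a2 + b j +
                ∑ l ∈ Finset.univ.filter (fun l => k < l ∧ l < j), (b l - c l)) *
              (Ee (b k - c k + a2) - 1)
          else 0)) = P k.1 * Q k.1 := by
      intro k
      have e1 : (if i = k then Ee (-(b i))
          else if i < k then Ee (a2 - c i) * (Ee (c i - b i - a2) - 1)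
          else 0) = P k.1 := by
        simp only [hP]
        by_cases hik : i = k
        · subst hik; simp
        · rw [if_neg hik, if_neg (fun h => hik (Fin.ext h))]
          by_cases hlt : i < k
          · rw [if_pos hlt, if_pos (Fin.lt_def.mp hlt)]
            simp only [extf_val]
          · rw [if_neg hlt, if_neg (fun h => hlt (Fin.lt_def.mpr h))]
      have e2 : (if k = j then Ee (b k)
          else if k < j then
            Ee (((j.val : ℂ) - (k.val : ℂ) - 1) * a2 + b j +
                ∑ l ∈ Finset.univ.filter (fun l => k < l ∧ l < j), (b l - c l)) *
              (Ee (b k - c k + a2) - 1)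
          else 0) = Q k.1 := by
        simp only [hQ]
        by_cases hkj : k = j
        · subst hkj; simp
        · rw [if_neg hkj, if_neg (fun h => hkj (Fin.ext h))]
          by_cases hlt : k < j
          · rw [if_pos hlt, if_pos (Fin.lt_def.mp hlt), filter_to_Ico k j, extf_sub]
            simp only [extf_val]
          · rw [if_neg hlt, if_neg (fun h => hlt (Fin.lt_def.mpr h))]
      rw [e1, e2]
    have hstep : ∑ k : Fin m, P k.1 * Q k.1 = ∑ n ∈ Finset.range m, P n * Q n :=
      Fin.sum_univ_eq_sum_range (fun n => P n * Q n) m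
    rw [Finset.sum_congr rfl fun k _ => hterm k, hstep]
    have hsub : Finset.Ico i.1 (j.1 + 1) ⊆ Finset.range m := by
      intro n hn
      rw [Finset.mem_Ico] at hn
      rw [Finset.mem_range]
      have := j.2
      omega
    have hzero : ∀ n ∈ Finset.range m, n ∉ Finset.Ico i.1 (j.1 + 1) → P n * Q n = 0 := by
      intro n _ hn
      rw [Finset.mem_Ico] at hn
      push_neg at hn
      rcases lt_or_ge n i.1 with h | h
      · rw [hP]
        simp only
        rw [if_neg (by omega), if_neg (by omega), zero_mul]
      · have hj : j.1 < n := by omega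
        rw [hQ]
        simp only
        rw [if_neg (by omega), if_neg (by omega), mul_zero]
    rw [← Finset.sum_subset hsub hzero]
    have hcongr : ∀ n ∈ Finset.Ico i.1 (j.1 + 1), P n * Q n =
        (if i.1 = n then Ee (-(extf m b i.1))
         else Ee (a2 - extf m c i.1) * (Ee (extf m c i.1 - extf m b i.1 - a2) - 1)) *
        (if n = j.1 then Ee (extf m b j.1)
         else Ee (((j.1 : ℂ) - (n : ℂ) - 1) * a2 + extf m b j.1 +
              ∑ l ∈ Finset.Ico (n + 1) j.1, (extf m b l - extf m c l)) *
            (Ee (extf m b n - extf m c n + a2) - 1)) := by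
      intro n hn
      rw [Finset.mem_Ico] at hn
      congr 1
      · rw [hP]
        simp only
        by_cases h : i.1 = n
        · rw [if_pos h, if_pos h]
        · rw [if_neg h, if_neg h, if_pos (by omega)]
      · rw [hQ]
        simp only
        by_cases h : n = j.1
        · subst h
          rw [if_pos rfl, if_pos rfl]
        · rw [if_neg h, if_neg h, if_pos (by omega)]
    rw [Finset.sum_congr rfl hcongr]
    exact key2 a2 (extf m b) (extf m c) i.1 j.1 (Fin.lt_def.mp hij)
  · -- i = j
    rw [if_pos rfl]
    rw [Finset.sum_eq_single i]
    · rw [if_pos rfl, if_pos rfl, ← Ee_add,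
        congrArg Ee (show -(b i) + b i = (0 : ℂ) by ring), Ee_zero]
    · intro k _ hk
      rcases lt_or_gt_of_ne (fun h : i = k => hk h.symm) with h | h
      · rw [if_neg (ne_of_gt h : k ≠ i), if_neg (asymm h : ¬ k < i), mul_zero]
      · rw [if_neg (ne_of_gt h : i ≠ k), if_neg (asymm h : ¬ i < k), zero_mul]
    · intro h
      exact absurd (Finset.mem_univ i) h
  · -- j < i
    rw [if_neg (ne_of_gt hij)]
    refine Finset.sum_eq_zero fun k _ => ?_
    rcases lt_or_ge k i with h | h
    · rw [if_neg (ne_of_gt h : i ≠ k), if_neg (asymm h : ¬ i < k), zero_mul]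
    · have h2 : j < k := lt_of_lt_of_le hij h
      rw [if_neg (ne_of_gt h2 : k ≠ j), if_neg (asymm h2 : ¬ k < j), mul_zero]

/-- Explicit inverse of the monodromy matrix `M₀` at zero. -/
theorem M0_inverse (m : ℕ) (a2 : ℂ) (b c : Fin m → ℂ) :
    letI e : ℂ → ℂ := fun z => Complex.exp (2 * Real.pi * Complex.I * z)
    letI M0 : Matrix (Fin m) (Fin m) ℂ := Matrix.of fun i j =>
      if i = j then e (b i)
      else if i < j then
        e (((j.val : ℂ) - (i.val : ℂ) - 1) * a2 + b j +
            ∑ k ∈ Finset.univ.filter (fun k => i < k ∧ k < j), (b k - c k)) *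
          (e (b i - c i + a2) - 1)
      else 0
    letI M0inv : Matrix (Fin m) (Fin m) ℂ := Matrix.of fun i j =>
      if i = j then e (-(b i))
      else if i < j then e (a2 - c i) * (e (c i - b i - a2) - 1)
      else 0
    M0 * M0inv = 1 ∧ M0inv * M0 = 1 := by
  refine ⟨?_, ?_⟩
  · ext i j
    rw [Matrix.mul_apply, Matrix.one_apply]
    exact entry1 m a2 b c i j
  · ext i j
    rw [Matrix.mul_apply, Matrix.one_apply]
    exact entry2 m a2 b c i j
end

section
/- For $i=1,\dots,m$, define vectors $p_i \in \mathbb{C}^m$ by $p_i^j = e^{2\pi\sqrt{-1}(a_1-a_2+b_i-b_j)}(e^{2\pi\sqrt{-1}(b_j-c_j+a_2)}-1)\,\prod_{k=j+1}^m(e^{2\pi\sqrt{-1}(b_i-c_k+a_2)}-1)\big/\prod_{k=j,k\ne i}^m(e^{2\pi\sqrt{-1}(b_i-b_k)}-1)$ for $i\ge j$ and $p_i^j = 0$ for $i<j$, where $a_1$ is determined by $a_1 + (m-1)a_2 + \sum_k (b_k - c_k) = 0$. Then $M_0\, p_i = e^{2\pi\sqrt{-1}\,b_i}\, p_i$, with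 $M_0$ the explicit upper-triangular monodromy matrix defined above. -/
open Finset Complex



lemma core_telescope (i : ℕ) (Q F D' w E : ℕ → ℂ)
    (hQ : ∀ r, r < i → Q r = E (r+1) * (D' (r+1))⁻¹ * Q (r+1))
    (hEF : E i = F i) (hD'i : D' i = 1)
    (hs : ∀ s, s < i → E s = F s + w s * D' s)
    (hD' : ∀ s, s ≤ i → D' s ≠ 0) :
    ∀ r, r < i →
      ∑ j ∈ Finset.Ioc r i, (∏ k ∈ Finset.Ioo r j, w k) * (F j * (D' j)⁻¹ * Q j) = Q r := by
  have key : ∀ n r, r < i → i - r = n →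
      ∑ j ∈ Finset.Ioc r i, (∏ k ∈ Finset.Ioo r j, w k) * (F j * (D' j)⁻¹ * Q j) = Q r := by
    intro n
    induction n with
    | zero => intro r hr h; omega
    | succ n IH =>
      intro r hr h
      by_cases hri : r + 1 = i
      · have h1 : Finset.Ioc r i = {i} := by ext x; simp [Finset.mem_Ioc]; omega
        have h2 : Finset.Ioo r i = ∅ := by ext x; simp [Finset.mem_Ioo]; omega
        subst hri
        rw [h1, Finset.sum_singleton, h2, Finset.prod_empty, hQ r hr, hD'i, hEF]
        ring
      · have h1 : r + 1 < i := by omega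
        have hIoc : Finset.Ioc r i = insert (r+1) (Finset.Ioc (r+1) i) := by
          ext x; simp [Finset.mem_Ioc, Finset.mem_insert]; omega
        have hnotmem : r + 1 ∉ Finset.Ioc (r+1) i := by simp
        rw [hIoc, Finset.sum_insert hnotmem]
        have hIoo0 : Finset.Ioo r (r+1) = ∅ := by ext x; simp [Finset.mem_Ioo]
        rw [hIoo0, Finset.prod_empty]
        have hcongr : ∀ j ∈ Finset.Ioc (r+1) i,
            (∏ k ∈ Finset.Ioo r j, w k) * (F j * (D' j)⁻¹ * Q j)
            = w (r+1) * ((∏ k ∈ Finset.Ioo (r+1) j, w k) * (F j * (D' j)⁻¹ * Q j)) := by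
          intro j hj
          simp only [Finset.mem_Ioc] at hj
          have : Finset.Ioo r j = insert (r+1) (Finset.Ioo (r+1) j) := by
            ext x; simp [Finset.mem_Ioo, Finset.mem_insert]; omega
          rw [this, Finset.prod_insert (by simp)]
          ring
        rw [Finset.sum_congr rfl hcongr, ← Finset.mul_sum, IH (r+1) h1 (by omega)]
        rw [hQ r hr, hs (r+1) h1]
        have hne := hD' (r+1) (le_of_lt h1)
        field_simp
  intro r hr
  exact key (i - r) r hr rfl



lemma fin_prod_eq {m : ℕ} (q : Fin m → Prop) [DecidablePred q] (P : ℕ → Prop)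
    [DecidablePred P] (hqP : ∀ k : Fin m, q k ↔ P k.val) (g : ℕ → ℂ) :
    ∏ k ∈ Finset.univ.filter q, g k.val = ∏ k ∈ (Finset.range m).filter P, g k := by
  rw [Finset.prod_filter, Finset.prod_filter,
    ← Fin.prod_univ_eq_prod_range (fun n => if P n then g n else 1) m]
  exact Finset.prod_congr rfl (fun k _ => if_congr (hqP k) rfl rfl)

lemma fin_sum_eq {m : ℕ} (q : Fin m → Prop) [DecidablePred q] (P : ℕ → Prop)
    [DecidablePred P] (hqP : ∀ k : Fin m, q k ↔ P k.val) (g : ℕ → ℂ) :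
    ∑ k ∈ Finset.univ.filter q, g k.val = ∑ k ∈ (Finset.range m).filter P, g k := by
  rw [Finset.sum_filter, Finset.sum_filter,
    ← Fin.sum_univ_eq_sum_range (fun n => if P n then g n else 0) m]
  exact Finset.sum_congr rfl (fun k _ => if_congr (hqP k) rfl rfl)


section
variable {m : ℕ} (a2 a1 : ℂ) (b c : Fin m → ℂ) (e : ℂ → ℂ)

theorem aux_row (he : ∀ x y, e (x + y) = e x * e y) (he0 : e 0 = 1)
    (hgen1 : ∀ i k : Fin m, i ≠ k → e (b i - b k) ≠ 1)
    (hgen2 : ∀ i k : Fin m, e (b i - c k + a2) ≠ 1)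
    (i r : Fin m) (M p : Fin m → ℂ)
    (hM : ∀ j, M j = if r = j then e (b r)
      else if r < j then
        e (((j.val : ℂ) - (r.val : ℂ) - 1) * a2 + b j +
            ∑ k ∈ Finset.univ.filter (fun k => r < k ∧ k < j), (b k - c k)) *
          (e (b r - c r + a2) - 1)
      else 0)
    (hp : ∀ j, p j = if j ≤ i then
        e (a1 - a2 + b i - b j) * (e (b j - c j + a2) - 1) *
          (∏ k ∈ Finset.univ.filter (fun k => j < k), (e (b i - c k + a2) - 1)) /
          ∏ k ∈ Finset.univ.filter (fun k => j ≤ k ∧ k ≠ i), (e (b i - b k) - 1)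
      else 0) :
    ∑ j, M j * p j = e (b i) * p r := by
  have hm : 0 < m := i.pos
  set I := i.val with hI
  set R := r.val with hR
  -- ℕ-extensions of b, c
  set b' : ℕ → ℂ := fun n => b ⟨n % m, Nat.mod_lt _ hm⟩ with hb'def
  set c' : ℕ → ℂ := fun n => c ⟨n % m, Nat.mod_lt _ hm⟩ with hc'def
  have hb' : ∀ k : Fin m, b' k.val = b k := by
    intro k; simp only [hb'def]; congr 1; exact Fin.ext (Nat.mod_eq_of_lt k.isLt)
  have hc' : ∀ k : Fin m, c' k.val = c k := by
    intro k; simp only [hc'def]; congr 1; exact Fin.ext (Nat.mod_eq_of_lt k.isLt)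
  set E : ℕ → ℂ := fun s => e (b i - c' s + a2) - 1 with hE
  set Dn : ℕ → ℂ := fun s => e (b i - b' s) - 1 with hDndef
  set D' : ℕ → ℂ := fun s => if s = I then 1 else Dn s with hD'def
  set Fn : ℕ → ℂ := fun s => e (b' s - c' s + a2) - 1 with hFn
  set w : ℕ → ℂ := fun s => e (a2 + b' s - c' s) with hw
  set Q : ℕ → ℂ := fun s =>
    (∏ k ∈ Finset.Ico (s+1) m, E k) * (∏ k ∈ Finset.Ico (s+1) m, D' k)⁻¹ with hQdef
  have hesum : ∀ (s : Finset ℕ) (g : ℕ → ℂ), e (∑ k ∈ s, g k) = ∏ k ∈ s, e (g k) := by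
    intro s g
    induction s using Finset.cons_induction with
    | empty => simpa using he0
    | cons a s ha ih => rw [Finset.sum_cons, Finset.prod_cons, he, ih]
  have hDn : ∀ s, s < m → s ≠ I → Dn s ≠ 0 := by
    intro s hs hne
    have h := hgen1 i ⟨s, hs⟩ (fun hcontra => hne (congrArg Fin.val hcontra).symm)
    have : b' s = b ⟨s, hs⟩ := by
      simp only [hb'def]; congr 1; exact Fin.ext (Nat.mod_eq_of_lt hs)
    rw [hDndef]; simp only [this]
    exact sub_ne_zero.mpr h
  -- formula for p
  have hpj : ∀ j : Fin m, j ≤ i →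
      p j = e (a1 - a2 + b i - b j) * Fn j.val * (D' j.val)⁻¹ * Q j.val := by
    intro j hji
    rw [hp j, if_pos hji]
    have hnum : ∏ k ∈ Finset.univ.filter (fun k => j < k), (e (b i - c k + a2) - 1)
        = ∏ k ∈ Finset.Ico (j.val + 1) m, E k := by
      have step : ∀ k ∈ Finset.univ.filter (fun k : Fin m => j < k),
          (e (b i - c k + a2) - 1) = E k.val := by
        intro k _; rw [hE]; simp [hc' k]
      rw [Finset.prod_congr rfl step,
        fin_prod_eq (fun k => j < k) (fun n => j.val < n) (fun k => Fin.lt_def) E]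
      congr 1
      ext x; simp [Finset.mem_Ico, Finset.mem_filter]; omega
    have hden : ∏ k ∈ Finset.univ.filter (fun k => j ≤ k ∧ k ≠ i), (e (b i - b k) - 1)
        = D' j.val * ∏ k ∈ Finset.Ico (j.val + 1) m, D' k := by
      have h1 : ∏ k ∈ Finset.univ.filter (fun k => j ≤ k ∧ k ≠ i), (e (b i - b k) - 1)
          = ∏ k ∈ (Finset.range m).filter (fun n => j.val ≤ n ∧ n ≠ I), Dn k := by
        have step : ∀ k ∈ Finset.univ.filter (fun k : Fin m => j ≤ k ∧ k ≠ i),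
            (e (b i - b k) - 1) = Dn k.val := by
          intro k _; rw [hDndef]; simp [hb' k]
        rw [Finset.prod_congr rfl step]
        exact fin_prod_eq _ _ (fun k => by
          rw [hI]; exact and_congr Fin.le_def (not_congr Fin.ext_iff)) Dn
      have h2 : (Finset.range m).filter (fun n => j.val ≤ n ∧ n ≠ I)
          = (Finset.Ico j.val m).filter (fun n => n ≠ I) := by
        ext x; simp [Finset.mem_Ico, Finset.mem_filter]; omega
      have h3 : ∏ k ∈ (Finset.Ico j.val m).filter (fun n => n ≠ I), Dn k
          = ∏ k ∈ Finset.Ico j.val m, D' k := by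
        rw [Finset.prod_filter]
        exact Finset.prod_congr rfl (fun k _ => by
          rw [hD'def]
          by_cases hk : k = I <;> simp [hk])
      have h4 : Finset.Ico j.val m = insert j.val (Finset.Ico (j.val + 1) m) := by
        ext x; simp [Finset.mem_Ico, Finset.mem_insert]
        constructor
        · intro hx; omega
        · intro hx; rcases hx with hx | hx
          · exact ⟨hx ▸ le_refl _, hx ▸ j.isLt⟩
          · omega
      rw [h1, h2, h3, h4, Finset.prod_insert (by simp)]
    rw [hnum, hden, hQdef]
    have : Fn j.val = e (b j - c j + a2) - 1 := by rw [hFn]; simp [hb' j, hc' j]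
    rw [this, div_eq_mul_inv, mul_inv]
    ring
  have hIm : I < m := i.isLt
  by_cases hir : r ≤ i
  · -- r ≤ i
    set S := Finset.univ.filter (fun j : Fin m => r < j ∧ j ≤ i) with hS
    have hrS : r ∉ S := by simp [hS]
    have hsplit : ∑ j, M j * p j = M r * p r + ∑ j ∈ S, M j * p j := by
      rw [← Finset.sum_insert (f := fun j => M j * p j) hrS]
      refine (Finset.sum_subset (Finset.subset_univ _) ?_).symm
      intro j _ hj
      simp only [Finset.mem_insert, hS, Finset.mem_filter, Finset.mem_univ, true_and,
        not_or, not_and] at hj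
      obtain ⟨hjr, hcond⟩ := hj
      rcases lt_trichotomy r j with hlt2 | heq | hgt
      · rw [hp j, if_neg (hcond hlt2), mul_zero]
      · exact absurd heq.symm hjr
      · have h1 : ¬ r = j := fun h => absurd (h ▸ hgt) (lt_irrefl _)
        rw [hM j, if_neg h1, if_neg (not_lt.2 (le_of_lt hgt)), zero_mul]
    have hMr : M r = e (b r) := by rw [hM r, if_pos rfl]
    rw [hsplit, hMr]
    by_cases hri : r = i
    · subst hri
      have hz : ∑ j ∈ S, M j * p j = 0 := Finset.sum_eq_zero (by
        intro j hj
        simp only [hS, Finset.mem_filter] at hj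
        exact absurd (lt_of_lt_of_le hj.2.1 hj.2.2) (lt_irrefl r))
      rw [hz]; ring
    · have hlt : r < i := lt_of_le_of_ne hir hri
      have hltv : R < I := Fin.lt_def.mp hlt
      -- core hypotheses
      have hQrec : ∀ s, s < I → Q s = E (s+1) * (D' (s+1))⁻¹ * Q (s+1) := by
        intro s hs
        have hsm : s + 1 < m := by omega
        have hsp : Finset.Ico (s+1) m = insert (s+1) (Finset.Ico (s+2) m) := by
          ext x; simp only [Finset.mem_Ico, Finset.mem_insert]; omega
        simp only [hQdef]
        rw [hsp, Finset.prod_insert (by simp), Finset.prod_insert (by simp), mul_inv]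
        ring
      have hEFi : E I = Fn I := by
        simp only [hE, hFn]; rw [hI, hb' i]
      have hD'I : D' I = 1 := by simp [hD'def]
      have hsid : ∀ s, s < I → E s = Fn s + w s * D' s := by
        intro s hs
        have hne : s ≠ I := Nat.ne_of_lt hs
        have h1 : e (b i - c' s + a2) = e (a2 + b' s - c' s) * e (b i - b' s) := by
          rw [← he]; congr 1; ring
        have h2 : e (a2 + b' s - c' s) = e (b' s - c' s + a2) := by congr 1; ring
        simp only [hE, hFn, hw, hD'def, hDndef, if_neg hne]
        linear_combination h1 + h2
      have hD'ne : ∀ s, s ≤ I → D' s ≠ 0 := by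
        intro s hs
        by_cases hsi : s = I
        · simp [hD'def, hsi]
        · simp only [hD'def, if_neg hsi]
          exact hDn s (by omega) hsi
      have hcore := core_telescope I Q Fn D' w E hQrec hEFi hD'I hsid hD'ne R hltv
      -- rewrite each term of the S-sum
      have hC : ∀ j ∈ S, M j * p j
          = (Fn R * e (a1 - a2 + b i)) *
            ((∏ k ∈ Finset.Ioo R j.val, w k) * (Fn j.val * (D' j.val)⁻¹ * Q j.val)) := by
        intro j hj
        simp only [hS, Finset.mem_filter, Finset.mem_univ, true_and] at hj
        obtain ⟨hrj, hji⟩ := hj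
        have hrjv : R < j.val := Fin.lt_def.mp hrj
        have hJm : j.val < m := j.isLt
        have hFnR : (e (b r - c r + a2) - 1) = Fn R := by
          simp only [hFn]; rw [hR, hb' r, hc' r]
        have hsum : ∑ k ∈ Finset.univ.filter (fun k => r < k ∧ k < j), (b k - c k)
            = ∑ k ∈ Finset.Ioo R j.val, (b' k - c' k) := by
          have step : ∀ k ∈ Finset.univ.filter (fun k : Fin m => r < k ∧ k < j),
              (b k - c k) = (fun n => b' n - c' n) k.val := by
            intro k _; simp [hb' k, hc' k]
          rw [Finset.sum_congr rfl step, fin_sum_eq _ (fun n => R < n ∧ n < j.val)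
            (fun k => and_congr Fin.lt_def Fin.lt_def) (fun n => b' n - c' n)]
          congr 1; ext x; simp only [Finset.mem_filter, Finset.mem_range, Finset.mem_Ioo]; omega
        have hMj : M j = e (((j.val : ℂ) - (R : ℂ) - 1) * a2 + b j +
            ∑ k ∈ Finset.Ioo R j.val, (b' k - c' k)) * Fn R := by
          rw [hM j, if_neg (Fin.ne_of_lt hrj), if_pos hrj, hsum, hFnR]
        have hwprod : ∏ k ∈ Finset.Ioo R j.val, w k
            = e (((j.val : ℂ) - (R : ℂ) - 1) * a2 + ∑ k ∈ Finset.Ioo R j.val, (b' k - c' k)) := by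
          simp only [hw]
          rw [← hesum]
          congr 1
          have step : ∀ k ∈ Finset.Ioo R j.val, a2 + b' k - c' k = a2 + (b' k - c' k) := by
            intro k _; ring
          rw [Finset.sum_congr rfl step, Finset.sum_add_distrib, Finset.sum_const,
            Nat.card_Ioo, nsmul_eq_mul]
          rw [show j.val - R - 1 = j.val - (R+1) by omega, Nat.cast_sub (by omega)]
          push_cast; ring
        rw [hMj, hpj j hji, hwprod]
        have hcomb : e (((j.val : ℂ) - (R : ℂ) - 1) * a2 + b j +
              ∑ k ∈ Finset.Ioo R j.val, (b' k - c' k)) * e (a1 - a2 + b i - b j)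
            = e (a1 - a2 + b i) *
              e (((j.val : ℂ) - (R : ℂ) - 1) * a2 + ∑ k ∈ Finset.Ioo R j.val, (b' k - c' k)) := by
          rw [← he, ← he]; congr 1; ring
        linear_combination (Fn j.val * (D' j.val)⁻¹ * Q j.val * Fn R) * hcomb
      rw [Finset.sum_congr rfl hC, ← Finset.mul_sum]
      have hreindex : ∑ j ∈ S,
            ((∏ k ∈ Finset.Ioo R j.val, w k) * (Fn j.val * (D' j.val)⁻¹ * Q j.val))
          = ∑ j ∈ Finset.Ioc R I, ((∏ k ∈ Finset.Ioo R j, w k) * (Fn j * (D' j)⁻¹ * Q j)) := by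
        simp only [hS]
        rw [fin_sum_eq _ (fun n => R < n ∧ n ≤ I)
          (fun k => and_congr Fin.lt_def Fin.le_def)
          (fun n => (∏ k ∈ Finset.Ioo R n, w k) * (Fn n * (D' n)⁻¹ * Q n))]
        congr 1; ext x; simp only [Finset.mem_filter, Finset.mem_range, Finset.mem_Ioc]; omega
      rw [hreindex, hcore]
      -- final algebra
      have hprf : p r = e (a1 - a2 + b i - b r) * Fn R * (Dn R)⁻¹ * Q R := by
        rw [hpj r hir]
        have hD'R : D' R = Dn R := by
          simp only [hD'def, if_neg (Nat.ne_of_lt hltv)]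
        rw [hD'R]
      have hDnR : Dn R ≠ 0 := hDn R r.isLt (Nat.ne_of_lt hltv)
      have hDnRe : Dn R = e (b i - b r) - 1 := by
        simp only [hDndef]; rw [hR, hb' r]
      have h1 : e (b r) * e (a1 - a2 + b i - b r) = e (a1 - a2 + b i) := by
        rw [← he]; congr 1; ring
      have h2 : e (b r) * e (b i - b r) = e (b i) := by
        rw [← he]; congr 1; ring
      have h3 : e (b i) - e (b r) = e (b r) * (e (b i - b r) - 1) := by
        rw [mul_sub, h2, mul_one]
      have hinv : (e (b i - b r) - 1) * (e (b i - b r) - 1)⁻¹ = 1 :=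
        mul_inv_cancel₀ (hDnRe ▸ hDnR)
      have key : (e (b i) - e (b r)) * p r = Fn R * e (a1 - a2 + b i) * Q R := by
        rw [hprf, hDnRe]
        linear_combination (e (a1 - a2 + b i - b r) * Fn R * (e (b i - b r) - 1)⁻¹ * Q R) * h3
          + (e (b r) * e (a1 - a2 + b i - b r) * Fn R * Q R) * hinv + (Fn R * Q R) * h1
      linear_combination -key
  · -- i < r
    have hir' : i < r := not_le.1 hir
    have hpr : p r = 0 := by rw [hp r, if_neg hir]
    rw [hpr, mul_zero]
    apply Finset.sum_eq_zero
    intro j _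
    by_cases hji : j ≤ i
    · have hjr : j < r := lt_of_le_of_lt hji hir'
      have h1 : ¬ r = j := fun h => absurd (h ▸ hjr) (lt_irrefl _)
      rw [hM j, if_neg h1, if_neg (not_lt.2 (le_of_lt hjr)), zero_mul]
    · rw [hp j, if_neg hji, mul_zero]
end

/-- The vectors `p_i` are eigenvectors of the monodromy matrix `M₀` with
eigenvalues `e^{2π√-1 b_i}`. -/
theorem p_eigenvectors_of_M0 (m : ℕ) (a2 : ℂ) (b c : Fin m → ℂ)
    (hgen1 : ∀ i k : Fin m, i ≠ k →
      Complex.exp (2 * Real.pi * Complex.I * (b i - b k)) ≠ 1)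
    (hgen2 : ∀ i k : Fin m,
      Complex.exp (2 * Real.pi * Complex.I * (b i - c k + a2)) ≠ 1) :
    letI e : ℂ → ℂ := fun z => Complex.exp (2 * Real.pi * Complex.I * z)
    letI a1 : ℂ := -(((m : ℂ) - 1) * a2 + ∑ k, (b k - c k))
    letI M0 : Matrix (Fin m) (Fin m) ℂ := Matrix.of fun i j =>
      if i = j then e (b i)
      else if i < j then
        e (((j.val : ℂ) - (i.val : ℂ) - 1) * a2 + b j +
            ∑ k ∈ Finset.univ.filter (fun k => i < k ∧ k < j), (b k - c k)) *
          (e (b i - c i + a2) - 1)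
      else 0
    letI p : Fin m → Fin m → ℂ := fun i j =>
      if j ≤ i then
        e (a1 - a2 + b i - b j) * (e (b j - c j + a2) - 1) *
          (∏ k ∈ Finset.univ.filter (fun k => j < k), (e (b i - c k + a2) - 1)) /
          ∏ k ∈ Finset.univ.filter (fun k => j ≤ k ∧ k ≠ i), (e (b i - b k) - 1)
      else 0
    ∀ i : Fin m, M0.mulVec (p i) = e (b i) • p i := by
  intro i
  funext r
  have he : ∀ x y : ℂ, Complex.exp (2 * Real.pi * Complex.I * (x + y))
      = Complex.exp (2 * Real.pi * Complex.I * x) * Complex.exp (2 * Real.pi * Complex.I * y) := by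
    intro x y; rw [← Complex.exp_add]; congr 1; ring
  have he0 : Complex.exp (2 * Real.pi * Complex.I * (0:ℂ)) = 1 := by simp
  simp only [Matrix.mulVec, dotProduct, Matrix.of_apply, Pi.smul_apply, smul_eq_mul]
  exact aux_row a2 (-(((m : ℂ) - 1) * a2 + ∑ k, (b k - c k))) b c
    (fun z => Complex.exp (2 * Real.pi * Complex.I * z)) he he0 hgen1 hgen2 i r
    _ _ (fun j => rfl) (fun j => rfl)
end

section
/- Let $b_1,\dots,b_m$ be pairwise distinct complex numbers and let $X$ be the matrix with $X_{ij} = 1/(b_j-b_i)$ for $i\ne j$ and $X_{ii} = -\sum_{j\ne i}1/(b_j-b_i)$. Then $X$ is nilpotent with $X^{m-1} \ne 0$ and $X^m = 0$; i.e., the Jordan normal form of $X$ is a single nilpotent Jordan block of size $m$. -/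
open Finset

section CM
open Polynomial Matrix


noncomputable def cmQ (p : ℂ[X]) (a : ℂ) : ℂ[X] := (p - C (p.eval a)) /ₘ (X - C a)

noncomputable def cmPhi {m : ℕ} (b : Fin m → ℂ) (p : ℂ[X]) : ℂ[X] :=
  (∑ j, cmQ p (b j)) - derivative p

noncomputable def cmX {m : ℕ} (b : Fin m → ℂ) : Matrix (Fin m) (Fin m) ℂ :=
  Matrix.of fun i j =>
    if i = j then -∑ k ∈ Finset.univ.erase i, 1 / (b k - b i) else 1 / (b j - b i)

theorem cmQ_mul (p : ℂ[X]) (a : ℂ) : cmQ p a * (X - C a) = p - C (p.eval a) := by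
  rw [cmQ, mul_comm, mul_divByMonic_eq_iff_isRoot.2]
  simp [IsRoot]

theorem cmQ_eval_ne (p : ℂ[X]) (a c : ℂ) (h : c ≠ a) :
    (cmQ p a).eval c = (p.eval c - p.eval a) / (c - a) := by
  have h2 := congrArg (Polynomial.eval c) (cmQ_mul p a)
  simp only [eval_mul, eval_sub, eval_X, eval_C] at h2
  field_simp [sub_ne_zero.2 h]
  linear_combination h2

theorem cmQ_eval_self (p : ℂ[X]) (a : ℂ) :
    (cmQ p a).eval a = (derivative p).eval a := by
  have h2 := congrArg (fun q => (derivative q).eval a) (cmQ_mul p a)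
  simp only [derivative_mul, derivative_sub, derivative_X, derivative_C, eval_add, eval_mul,
    eval_sub, eval_X, eval_C, sub_self, mul_zero, zero_mul, add_zero, zero_add, sub_zero,
    mul_one] at h2
  linear_combination h2

theorem cmQ_natDegree_le (p : ℂ[X]) (a : ℂ) (d : ℕ) (hp : p.natDegree ≤ d + 1) :
    (cmQ p a).natDegree ≤ d := by
  rw [cmQ, natDegree_divByMonic _ (monic_X_sub_C a), natDegree_X_sub_C]
  have : (p - C (p.eval a)).natDegree ≤ d + 1 :=
    le_trans (natDegree_sub_le _ _) (by simp [hp])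
  omega

theorem cmQ_coeff (p : ℂ[X]) (a : ℂ) (d : ℕ) (hp : p.natDegree ≤ d + 1) :
    (cmQ p a).coeff d = p.coeff (d + 1) := by
  have h := congrArg (fun q => q.coeff (d + 1)) (cmQ_mul p a)
  simp only [coeff_mul_X_sub_C, coeff_sub] at h
  have h1 : (cmQ p a).coeff (d + 1) = 0 :=
    coeff_eq_zero_of_natDegree_lt (lt_of_le_of_lt (cmQ_natDegree_le p a d hp) (by omega))
  have h2 : (C (p.eval a)).coeff (d + 1) = 0 := by simp
  rw [h1, h2] at h
  linear_combination h

theorem cmPhi_zero {m : ℕ} (b : Fin m → ℂ) : cmPhi b 0 = 0 := by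
  simp [cmPhi, cmQ]

theorem cmPhi_natDegree_le {m : ℕ} (b : Fin m → ℂ) (p : ℂ[X]) (d : ℕ)
    (hp : p.natDegree ≤ d + 1) : (cmPhi b p).natDegree ≤ d := by
  refine le_trans (natDegree_sub_le _ _) (max_le ?_ ?_)
  · exact natDegree_sum_le_of_forall_le _ _ fun j _ => cmQ_natDegree_le p (b j) d hp
  · exact le_trans (natDegree_derivative_le p) (by omega)

theorem cmPhi_coeff {m : ℕ} (b : Fin m → ℂ) (p : ℂ[X]) (d : ℕ)
    (hp : p.natDegree ≤ d + 1) :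
    (cmPhi b p).coeff d = (m - (d + 1) : ℂ) * p.coeff (d + 1) := by
  simp only [cmPhi, coeff_sub, finset_sum_coeff, coeff_derivative]
  rw [Finset.sum_congr rfl fun j _ => cmQ_coeff p (b j) d hp]
  simp [Finset.sum_const]
  ring

theorem cmPhi_of_natDegree_zero {m : ℕ} (b : Fin m → ℂ) (p : ℂ[X])
    (hp : p.natDegree = 0) : cmPhi b p = 0 := by
  obtain ⟨c, rfl⟩ := natDegree_eq_zero.mp hp
  simp [cmPhi, cmQ]

/-- key: X acts on sampled polynomials as Φ -/
theorem cmX_mulVec {m : ℕ} (b : Fin m → ℂ) (hb : Function.Injective b) (p : ℂ[X]) :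
    cmX b *ᵥ (fun i => p.eval (b i)) = fun i => (cmPhi b p).eval (b i) := by
  funext i
  have hbne : ∀ j : Fin m, j ≠ i → b j - b i ≠ 0 := fun j hj =>
    sub_ne_zero.2 fun h => hj (hb h)
  simp only [Matrix.mulVec, dotProduct, cmX, Matrix.of_apply]
  rw [← Finset.sum_erase_add _ _ (Finset.mem_univ i)]
  simp only [if_pos rfl]
  have hL : ∀ j ∈ Finset.univ.erase i,
      (if i = j then -∑ k ∈ Finset.univ.erase i, 1 / (b k - b i) else 1 / (b j - b i)) *
        p.eval (b j) = (cmQ p (b j)).eval (b i) + p.eval (b i) / (b j - b i) := by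
    intro j hj
    have hji : j ≠ i := (Finset.mem_erase.mp hj).1
    rw [if_neg (fun h => hji h.symm), cmQ_eval_ne p (b j) (b i) (fun h => hji.symm (hb h))]
    have h1 := hbne j hji
    have h2 : b i - b j ≠ 0 := fun h => h1 (by linear_combination -h)
    field_simp
    ring
  rw [Finset.sum_congr rfl hL, Finset.sum_add_distrib]
  simp only [cmPhi, eval_sub, eval_finset_sum]
  rw [← Finset.sum_erase_add _ _ (Finset.mem_univ i), cmQ_eval_self]
  have : ∑ j ∈ Finset.univ.erase i, p.eval (b i) / (b j - b i)
      = (∑ j ∈ Finset.univ.erase i, 1 / (b j - b i)) * p.eval (b i) := by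
    rw [Finset.sum_mul]
    exact Finset.sum_congr rfl fun j hj => by ring
  rw [this]
  simp only [if_pos rfl, eq_self_iff_true, if_true, one_div]
  ring

theorem cmX_pow_mulVec {m : ℕ} (b : Fin m → ℂ) (hb : Function.Injective b) (k : ℕ)
    (p : ℂ[X]) :
    (cmX b) ^ k *ᵥ (fun i => p.eval (b i)) = fun i => ((cmPhi b)^[k] p).eval (b i) := by
  induction k generalizing p with
  | zero => simp
  | succ k ih =>
    rw [pow_succ, ← Matrix.mulVec_mulVec, cmX_mulVec b hb p,
      Function.iterate_succ_apply, ih (cmPhi b p)]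

theorem cmPhi_iter_vanish {m : ℕ} (b : Fin m → ℂ) (n : ℕ) (p : ℂ[X])
    (hp : p.natDegree ≤ n) : (cmPhi b)^[n + 1] p = 0 := by
  induction n generalizing p with
  | zero => simpa using cmPhi_of_natDegree_zero b p (Nat.le_zero.mp hp)
  | succ n ih =>
    rw [Function.iterate_succ_apply]
    exact ih _ (cmPhi_natDegree_le b p n hp)

theorem cmPhi_iter_vanish' {m : ℕ} (b : Fin m → ℂ) (n k : ℕ) (hk : n + 1 ≤ k) (p : ℂ[X])
    (hp : p.natDegree ≤ n) : (cmPhi b)^[k] p = 0 := by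
  obtain ⟨a, rfl⟩ := Nat.exists_eq_add_of_le hk
  rw [Nat.add_comm, Function.iterate_add_apply, cmPhi_iter_vanish b n p hp,
    Function.iterate_fixed (cmPhi_zero b)]

theorem cmX_pow_eq_zero {m : ℕ} (b : Fin m → ℂ) (hb : Function.Injective b) :
    cmX b ^ m = 0 := by
  have hV : IsUnit (Matrix.vandermonde b).det := by
    rw [Matrix.det_vandermonde]
    exact (Finset.prod_ne_zero_iff.2 fun i _ => Finset.prod_ne_zero_iff.2 fun j hj =>
      sub_ne_zero.2 fun h => absurd (hb h) (by simp at hj; omega)).isUnit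
  have key : cmX b ^ m * Matrix.vandermonde b = 0 := by
    ext i d
    have col : (fun k => (Matrix.vandermonde b) k d) = fun k => (X ^ (d : ℕ) : ℂ[X]).eval (b k) := by
      funext k; simp [Matrix.vandermonde]
    have h1 : (cmX b ^ m * Matrix.vandermonde b) i d
        = (cmX b ^ m *ᵥ fun k => (Matrix.vandermonde b) k d) i := rfl
    rw [h1, col, cmX_pow_mulVec b hb m (X ^ (d : ℕ))]
    have hd : (X ^ (d : ℕ) : ℂ[X]).natDegree ≤ (d : ℕ) := by simp
    rw [cmPhi_iter_vanish' b (d : ℕ) m (by omega) _ hd]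
    simp
  calc cmX b ^ m = cmX b ^ m * Matrix.vandermonde b * (Matrix.vandermonde b)⁻¹ :=
        (Matrix.mul_nonsing_inv_cancel_right _ _ hV).symm
    _ = 0 := by rw [key, Matrix.zero_mul]

theorem cm_coeff_iter {n : ℕ} (b : Fin (n + 1) → ℂ) :
    ∀ k, k ≤ n → ((cmPhi b)^[k] (X ^ n : ℂ[X])).natDegree ≤ n - k ∧
      ((cmPhi b)^[k] (X ^ n : ℂ[X])).coeff (n - k) = ((Nat.factorial k : ℕ) : ℂ) := by
  intro k
  induction k with
  | zero => intro _; simp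
  | succ k ih =>
    intro hk
    obtain ⟨h1, h2⟩ := ih (by omega)
    rw [Function.iterate_succ_apply']
    have hd : n - k = (n - (k + 1)) + 1 := by omega
    rw [hd] at h1 h2
    refine ⟨cmPhi_natDegree_le b _ _ h1, ?_⟩
    rw [cmPhi_coeff b _ _ h1, h2, Nat.cast_sub (show k + 1 ≤ n by omega)]
    push_cast [Nat.factorial_succ]
    ring

theorem cmX_pow_ne_zero {n : ℕ} (b : Fin (n + 1) → ℂ) (hb : Function.Injective b) :
    cmX b ^ n ≠ 0 := by
  intro h0
  obtain ⟨h1, h2⟩ := cm_coeff_iter b n le_rfl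
  set q := (cmPhi b)^[n] (X ^ n : ℂ[X]) with hq
  have hqc : q = C (q.coeff 0) := eq_C_of_natDegree_le_zero (by simpa using h1)
  have he : q.eval (b 0) = q.coeff 0 := by rw [hqc]; simp
  have := congrFun (cmX_pow_mulVec b hb n (X ^ n)) 0
  rw [h0] at this
  simp only [Matrix.zero_mulVec, Pi.zero_apply] at this
  rw [← hq, he] at this
  simp at h2
  rw [h2] at this
  exact Nat.cast_ne_zero.mpr (Nat.factorial_ne_zero n) this.symm

end CM

/-- The Calogero-Moser matrix `X` is a single nilpotent Jordan block of size `m`: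
`X^(m-1) ≠ 0` and `X^m = 0`. -/
theorem calogero_moser_jordan_block (m : ℕ) (hm : 0 < m) (b : Fin m → ℂ)
    (hb : Function.Injective b) :
    letI X : Matrix (Fin m) (Fin m) ℂ := Matrix.of fun i j =>
      if i = j then -∑ k ∈ Finset.univ.erase i, 1 / (b k - b i)
      else 1 / (b j - b i)
    X ^ (m - 1) ≠ 0 ∧ X ^ m = 0 := by
  show cmX b ^ (m - 1) ≠ 0 ∧ cmX b ^ m = 0
  obtain ⟨n, rfl⟩ : ∃ n, m = n + 1 := ⟨m - 1, by omega⟩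
  simp only [Nat.add_sub_cancel]
  exact ⟨cmX_pow_ne_zero b hb, cmX_pow_eq_zero b hb⟩
end

section
/- Let $b_1,\dots,b_m$ be pairwise distinct complex numbers and $\tau$ a complex number such that $b_j - b_i + \tau \ne 0$ for all $i,j$. Then $e^{X\tau} = EX(\tau)$, where $X$ is the Calogero-Moser matrix ($X_{ij}=1/(b_j-b_i)$ off-diagonal, row sums zero) and $EX(\tau)_{ij} = \frac{1}{b_j-b_i+\tau}\prod_{k=1}^m(b_j-b_k+\tau)\big/\prod_{k\ne j}(b_j-b_k)$. -/
open Finset Polynomial Nat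

namespace CMaux

variable {m : ℕ}

noncomputable def Xm (b : Fin m → ℂ) : Matrix (Fin m) (Fin m) ℂ := Matrix.of fun i j =>
  if i = j then -∑ k ∈ Finset.univ.erase i, 1 / (b k - b i)
  else 1 / (b j - b i)

noncomputable def den (b : Fin m → ℂ) (j : Fin m) : ℂ := ∏ k ∈ univ.erase j, (b j - b k)

noncomputable def P (b : Fin m → ℂ) (i j : Fin m) : ℂ[X] :=
  C ((den b j)⁻¹) * ∏ k ∈ univ.erase i, (X + C (b j - b k))

variable {b : Fin m → ℂ}

lemma sub_ne (hb : Function.Injective b) {j k : Fin m} (hk : k ≠ j) : b j - b k ≠ 0 :=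
  sub_ne_zero_of_ne fun e => hk ((hb e.symm))

lemma den_ne_zero (hb : Function.Injective b) (j : Fin m) : den b j ≠ 0 :=
  Finset.prod_ne_zero_iff.2 fun k hk => sub_ne hb (Finset.mem_erase.1 hk).1

lemma eval_P (τ : ℂ) (i j : Fin m) :
    eval τ (P b i j) = (den b j)⁻¹ * ∏ k ∈ univ.erase i, (b j - b k + τ) := by
  simp only [P, eval_mul, eval_C, eval_prod, eval_add, eval_X]
  congr 1
  exact Finset.prod_congr rfl fun k _ => by ring

lemma natDegree_prod_eq (i : Fin m) (c : Fin m → ℂ) :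
    (∏ k ∈ univ.erase i, (X + C (c k))).natDegree = m - 1 := by
  rw [Polynomial.natDegree_prod _ _ fun k _ => Polynomial.X_add_C_ne_zero (c k)]
  simp [Polynomial.natDegree_X_add_C, Finset.card_erase_of_mem, Finset.card_univ]

lemma natDegree_P_lt (hm : 0 < m) (i j : Fin m) : (P b i j).natDegree < m :=
  lt_of_le_of_lt ((natDegree_C_mul_le _ _).trans (natDegree_prod_eq i _).le) (by omega)

lemma group (hb : Function.Injective b) (i j : Fin m) (σ τ : ℂ) :
    eval (σ + τ) (P b i j) = ∑ l, eval σ (P b i l) * eval τ (P b l j) := by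
  classical
  have hm : 0 < m := i.pos
  set f : ℂ[X] := ∏ k ∈ univ.erase i, (X + C (σ - b k)) with hf
  have hf0 : ∀ k ∈ univ.erase i, (X + C (σ - b k)) ≠ (0 : ℂ[X]) :=
    fun k _ => X_add_C_ne_zero _
  have hfne : f ≠ 0 := Finset.prod_ne_zero_iff.2 hf0
  have hdeg : f.degree < ((univ : Finset (Fin m)).card : ℕ) := by
    rw [← Polynomial.natDegree_lt_iff_degree_lt hfne]
    rw [hf, Polynomial.natDegree_prod _ _ hf0]
    simp only [Polynomial.natDegree_X_add_C, Finset.sum_const, smul_eq_mul, mul_one,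
      Finset.card_erase_of_mem (mem_univ i), Finset.card_univ, Fintype.card_fin]
    omega
  have hint := Lagrange.eq_interpolate (s := (univ : Finset (Fin m))) (v := b) hb.injOn hdeg
  have hkey := congrArg (eval (b j + τ)) hint
  rw [Lagrange.interpolate_apply, Polynomial.eval_finset_sum] at hkey
  have hbasis : ∀ l : Fin m,
      eval (b j + τ) (C (eval (b l) f) * Lagrange.basis univ b l)
        = eval (b l) f * ((den b l)⁻¹ * ∏ k ∈ univ.erase l, (b j + τ - b k)) := by
    intro l
    rw [eval_mul, eval_C]
    congr 1
    rw [Lagrange.basis, eval_prod]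
    have : ∀ k ∈ univ.erase l, eval (b j + τ) (Lagrange.basisDivisor (b l) (b k))
        = (b l - b k)⁻¹ * (b j + τ - b k) := by
      intro k _
      simp [Lagrange.basisDivisor]
    rw [Finset.prod_congr rfl this, Finset.prod_mul_distrib, Finset.prod_inv_distrib]
    rfl
  rw [Finset.sum_congr rfl fun l _ => hbasis l] at hkey
  have e1 : eval (σ + τ) (P b i j) = (den b j)⁻¹ * eval (b j + τ) f := by
    rw [eval_P]
    congr 1
    rw [hf, eval_prod]
    refine Finset.prod_congr rfl fun k _ => ?_
    simp only [eval_add, eval_X, eval_C]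
    ring
  rw [e1, hkey, Finset.mul_sum]
  refine Finset.sum_congr rfl fun l _ => ?_
  rw [eval_P, eval_P]
  have e2 : eval (b l) f = ∏ k ∈ univ.erase i, (b l - b k + σ) := by
    rw [hf, eval_prod]
    refine Finset.prod_congr rfl fun k _ => ?_
    simp only [eval_add, eval_X, eval_C]
    ring
  have e3 : ∏ k ∈ univ.erase l, (b j + τ - b k) = ∏ k ∈ univ.erase l, (b j - b k + τ) :=
    Finset.prod_congr rfl fun k _ => by ring
  rw [e2, e3]
  ring

lemma derivative_finset_prod {ι : Type*} [DecidableEq ι] (s : Finset ι) (f : ι → ℂ[X]) :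
    derivative (∏ k ∈ s, f k) = ∑ i ∈ s, (∏ j ∈ s.erase i, f j) * derivative (f i) := by
  classical
  induction s using Finset.induction_on with
  | empty => simp
  | insert a s ha ih =>
    rw [Finset.prod_insert ha, derivative_mul, ih, Finset.sum_insert ha,
      Finset.erase_insert ha]
    have h1 : ∀ l ∈ s, (∏ j ∈ (insert a s).erase l, f j) * derivative (f l)
        = f a * ((∏ j ∈ s.erase l, f j) * derivative (f l)) := by
      intro l hl
      rw [Finset.erase_insert_of_ne (ne_of_mem_of_not_mem hl ha).symm,
        Finset.prod_insert (fun hc => ha (Finset.mem_of_mem_erase hc))]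
      ring
    rw [Finset.sum_congr rfl h1, ← Finset.mul_sum]
    ring

lemma coeff_one_prod (i : Fin m) (c : Fin m → ℂ) :
    (∏ k ∈ univ.erase i, (X + C (c k))).coeff 1
      = ∑ l ∈ univ.erase i, ∏ k ∈ (univ.erase i).erase l, (c k) := by
  have h1 : (∏ k ∈ univ.erase i, (X + C (c k))).coeff 1
      = eval 0 (derivative (∏ k ∈ univ.erase i, (X + C (c k)))) := by
    rw [← Polynomial.coeff_zero_eq_eval_zero, Polynomial.coeff_derivative]
    push_cast
    ring
  rw [h1, derivative_finset_prod]
  simp [Polynomial.eval_finset_sum, eval_prod]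

lemma coeff_one_P (hb : Function.Injective b) (i j : Fin m) :
    (P b i j).coeff 1 = Xm b i j := by
  classical
  rw [P, Polynomial.coeff_C_mul, coeff_one_prod]
  by_cases hij : i = j
  · subst hij
    rw [Xm]
    simp only [Matrix.of_apply, if_pos rfl]
    rw [Finset.mul_sum]
    have key : ∀ l ∈ univ.erase i,
        (den b i)⁻¹ * ∏ k ∈ (univ.erase i).erase l, (b i - b k) = -(1 / (b l - b i)) := by
      intro l hl
      have hR : ∏ k ∈ (univ.erase i).erase l, (b i - b k) ≠ 0 :=
        Finset.prod_ne_zero_iff.2 fun k hk =>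
          sub_ne hb (Finset.mem_erase.1 (Finset.mem_of_mem_erase hk)).1
      have hden : den b i = (b i - b l) * ∏ k ∈ (univ.erase i).erase l, (b i - b k) :=
        (Finset.mul_prod_erase _ _ hl).symm
      rw [hden, mul_inv, mul_assoc, inv_mul_cancel₀ hR, mul_one, one_div, ← inv_neg, neg_sub]
    rw [Finset.sum_congr rfl key, Finset.sum_neg_distrib]
    simp
  · have hjmem : j ∈ univ.erase i := Finset.mem_erase.2 ⟨fun e => hij e.symm, mem_univ j⟩
    rw [Finset.sum_eq_single j]
    · have himem : i ∈ univ.erase j := Finset.mem_erase.2 ⟨hij, mem_univ i⟩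
      have hR : ∏ k ∈ (univ.erase j).erase i, (b j - b k) ≠ 0 :=
        Finset.prod_ne_zero_iff.2 fun k hk =>
          sub_ne hb (Finset.mem_erase.1 (Finset.mem_of_mem_erase hk)).1
      have hden : den b j = (b j - b i) * ∏ k ∈ (univ.erase j).erase i, (b j - b k) :=
        (Finset.mul_prod_erase _ _ himem).symm
      rw [Finset.erase_right_comm, hden, mul_inv, mul_assoc, inv_mul_cancel₀ hR, mul_one]
      rw [Xm]
      simp [hij, one_div]
    · intro l hl hlj
      exact Finset.prod_eq_zero (Finset.mem_erase.2 ⟨fun e => hlj e.symm, hjmem⟩)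
        (sub_self (b j))
    · intro hc
      exact absurd hjmem hc


lemma eval_zero_P (hb : Function.Injective b) (i j : Fin m) :
    eval 0 (P b i j) = if i = j then 1 else 0 := by
  rw [eval_P]
  by_cases hij : i = j
  · subst hij
    rw [if_pos rfl]
    have : ∏ k ∈ univ.erase i, (b i - b k + 0) = den b i :=
      Finset.prod_congr rfl fun k _ => by ring
    rw [this, inv_mul_cancel₀ (den_ne_zero hb i)]
  · rw [if_neg hij]
    have hjmem : j ∈ univ.erase i := Finset.mem_erase.2 ⟨fun e => hij e.symm, mem_univ j⟩
    rw [Finset.prod_eq_zero hjmem (by ring), mul_zero]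

lemma taylor_eq (hb : Function.Injective b) (τ : ℂ) (i j : Fin m) :
    taylor τ (P b i j) = ∑ l, P b i l * C (eval τ (P b l j)) := by
  refine Polynomial.funext fun σ => ?_
  rw [Polynomial.taylor_eval, Polynomial.eval_finset_sum]
  rw [group hb i j σ τ]
  exact Finset.sum_congr rfl fun l _ => by rw [eval_mul, eval_C]

lemma ode (hb : Function.Injective b) (τ : ℂ) (i j : Fin m) :
    eval τ (derivative (P b i j)) = ∑ l, Xm b i l * eval τ (P b l j) := by
  have h := congrArg (fun p => Polynomial.coeff p 1) (taylor_eq hb τ i j)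
  simp only [Polynomial.taylor_coeff_one, Polynomial.finset_sum_coeff,
    Polynomial.coeff_mul_C] at h
  rw [h]
  exact Finset.sum_congr rfl fun l _ => by rw [coeff_one_P hb, mul_comm]

lemma odePoly (hb : Function.Injective b) (i j : Fin m) :
    derivative (P b i j) = ∑ l, C (Xm b i l) * P b l j := by
  refine Polynomial.funext fun τ => ?_
  rw [ode hb τ i j, Polynomial.eval_finset_sum]
  exact Finset.sum_congr rfl fun l _ => by rw [eval_mul, eval_C]

lemma coeff_P (hb : Function.Injective b) (n : ℕ) (i j : Fin m) :
    (P b i j).coeff n = ((n ! : ℂ))⁻¹ * (Xm b ^ n) i j := by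
  induction n generalizing i j with
  | zero =>
    rw [Polynomial.coeff_zero_eq_eval_zero, eval_zero_P hb, pow_zero]
    simp [Matrix.one_apply]
  | succ n ih =>
    have hD := congrArg (fun p => Polynomial.coeff p n) (odePoly hb i j)
    simp only [Polynomial.coeff_derivative, Polynomial.finset_sum_coeff,
      Polynomial.coeff_C_mul] at hD
    have h2 : ∑ l, Xm b i l * (P b l j).coeff n = ((n ! : ℂ))⁻¹ * (Xm b ^ (n + 1)) i j := by
      rw [_root_.pow_succ', Matrix.mul_apply, Finset.mul_sum]
      exact Finset.sum_congr rfl fun l _ => by rw [ih]; ring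
    rw [h2] at hD
    have hne : ((n : ℂ) + 1) ≠ 0 := Nat.cast_add_one_ne_zero n
    have : (P b i j).coeff (n + 1)
        = ((n : ℂ) + 1)⁻¹ * (((n ! : ℂ))⁻¹ * (Xm b ^ (n + 1)) i j) := by
      rw [← hD]
      field_simp
      try ring
    rw [this, Nat.factorial_succ]
    push_cast
    rw [mul_inv]
    ring

lemma X_pow_eq_zero (hb : Function.Injective b) (hm : 0 < m) : Xm b ^ m = 0 := by
  ext i j
  have h1 : (P b i j).coeff m = 0 :=
    Polynomial.coeff_eq_zero_of_natDegree_lt (natDegree_P_lt hm i j)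
  have h2 := coeff_P hb m i j
  rw [h1] at h2
  have hfac : ((m ! : ℂ))⁻¹ ≠ 0 := inv_ne_zero (by exact_mod_cast Nat.factorial_ne_zero m)
  have := (mul_eq_zero.1 h2.symm).resolve_left hfac
  simpa using this

end CMaux

open CMaux

/-- The matrix exponential of the Calogero-Moser matrix: `e^{Xτ} = EX(τ)`. -/
theorem exp_calogero_moser (m : ℕ) (b : Fin m → ℂ) (hb : Function.Injective b)
    (τ : ℂ) (h : ∀ i j : Fin m, b j - b i + τ ≠ 0) :
    letI X : Matrix (Fin m) (Fin m) ℂ := Matrix.of fun i j =>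
      if i = j then -∑ k ∈ Finset.univ.erase i, 1 / (b k - b i)
      else 1 / (b j - b i)
    letI EX : Matrix (Fin m) (Fin m) ℂ := Matrix.of fun i j =>
      (1 / (b j - b i + τ)) * ((∏ k, (b j - b k + τ)) /
        ∏ k ∈ Finset.univ.erase j, (b j - b k))
    NormedSpace.exp (τ • X) = EX := by
  rcases Nat.eq_zero_or_pos m with hm | hm
  · subst hm
    ext i j
    exact i.elim0
  show NormedSpace.exp (τ • Xm b) = _
  have hExp : NormedSpace.exp (τ • Xm b)
      = ∑ n ∈ Finset.range m, (n ! : ℂ)⁻¹ • (τ • Xm b) ^ n := by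
    rw [NormedSpace.exp_eq_tsum (𝕂 := ℂ)]
    refine tsum_eq_sum fun n hn => ?_
    have hmn : m ≤ n := by simpa using hn
    obtain ⟨k, rfl⟩ : ∃ k, n = m + k := ⟨n - m, by omega⟩
    rw [_root_.smul_pow, pow_add, pow_add, X_pow_eq_zero hb hm, zero_mul, smul_zero, smul_zero]
  rw [hExp]
  ext i j
  rw [Matrix.sum_apply]
  have lhs_eq : ∑ n ∈ Finset.range m, ((n ! : ℂ)⁻¹ • (τ • Xm b) ^ n) i j
      = eval τ (P b i j) := by
    rw [Polynomial.eval_eq_sum_range' (natDegree_P_lt hm i j)]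
    refine Finset.sum_congr rfl fun n _ => ?_
    rw [coeff_P hb n i j, _root_.smul_pow, Matrix.smul_apply, Matrix.smul_apply, smul_eq_mul,
      smul_eq_mul]
    ring
  rw [lhs_eq, eval_P]
  rw [Matrix.of_apply]
  rw [← Finset.mul_prod_erase Finset.univ _ (Finset.mem_univ i)]
  have hA : b j - b i + τ ≠ 0 := h i j
  have hD : den b j ≠ 0 := den_ne_zero hb j
  rw [den] at hD ⊢
  field_simp
end
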